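/- arXiv:2103.13108 — 4 statements merged into one kernel-verified Lean document; each statement's English description precedes it below -/
import Mathlib

section
/- Convergence of the inexact semi-proximal augmented Lagrangian method (isPALM). Assume the KKT solution set of problem (Aug) is nonempty and that N := Σ_g + T + σGG* is positive definite. Let {(v^k, x^k)} be any sequence generated by Algorithm isPALM (i.e., satisfying the inexact optimality inclusion with errors d^k, ‖N^{−1/2}d^k‖ ≤ ε_k, and the multiplier update x^{k+1} = x^k + τσ(G*v^{k+1} − c) with τ ∈ (0,2) and Σ_k ε_k < ∞). Then: (a) the sequence {(v^k, x^k)} is bounded; (b) every accumulation point of {(v^k, x^k)} solves the KKT system of (Aug); and (c) the whole sequence {(v^k, x^k)} converges to a solution of the KKT system of (Aug). -/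
open RealInnerProductSpace Filter

noncomputable section

/-- The subdifferential of an extended-real-valued function `g` at a point `v`:
`∂g(v) = {ζ : g(y) ≥ g(v) + ⟨ζ, y − v⟩ for all y}`. -/
def SubdiffAt {V : Type*} [NormedAddCommGroup V] [InnerProductSpace ℝ V]
    (g : V → EReal) (v : V) : Set V :=
  {ζ | ∀ y : V, g v + ((⟪ζ, y - v⟫ : ℝ) : EReal) ≤ g y}

lemma ereal_exists_coe {x : EReal} (hb : x ≠ ⊥) (ht : x ≠ ⊤) : ∃ r : ℝ, x = (r : EReal) := by
  induction x using EReal.rec with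
  | bot => exact absurd rfl hb
  | coe r => exact ⟨r, rfl⟩
  | top => exact absurd rfl ht

lemma ereal_add_le_coe {x : EReal} {s t : ℝ} (h : x + (s : EReal) ≤ (t : EReal)) :
    x ≤ ((t - s : ℝ) : EReal) := by
  induction x using EReal.rec with
  | bot => exact bot_le
  | coe r =>
      rw [← EReal.coe_add, EReal.coe_le_coe_iff] at h
      exact_mod_cast (by linarith : r ≤ t - s)
  | top => simp at h

lemma ereal_le_coe_sub {x : EReal} {s t : ℝ} (h : x ≤ ((t - s : ℝ) : EReal)) :
    x + (s : EReal) ≤ (t : EReal) := by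
  induction x using EReal.rec with
  | bot => simp
  | coe r =>
      rw [EReal.coe_le_coe_iff] at h
      rw [← EReal.coe_add, EReal.coe_le_coe_iff]
      linarith
  | top => exact absurd (top_le_iff.mp h) (EReal.coe_ne_top _)

lemma psd_cauchy {V : Type*} [NormedAddCommGroup V] [InnerProductSpace ℝ V]
    (T : V →ₗ[ℝ] V) (hsym : LinearMap.IsSymmetric T) (hpsd : ∀ u, 0 ≤ ⟪u, T u⟫) (u w : V) :
    ⟪u, T w⟫ ^ 2 ≤ ⟪u, T u⟫ * ⟪w, T w⟫ := by
  have hcomm : ⟪w, T u⟫ = ⟪u, T w⟫ := by rw [← hsym w u, real_inner_comm]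
  have key : ∀ lam : ℝ, 0 ≤ ⟪w, T w⟫ * (lam * lam) + (2 * ⟪u, T w⟫) * lam + ⟪u, T u⟫ := by
    intro lam
    have h0 := hpsd (u + lam • w)
    have e1 : ⟪u + lam • w, T (u + lam • w)⟫
        = ⟪w, T w⟫ * (lam * lam) + (2 * ⟪u, T w⟫) * lam + ⟪u, T u⟫ := by
      rw [map_add, map_smul, inner_add_left, inner_add_right, inner_add_right,
        real_inner_smul_left, real_inner_smul_left, real_inner_smul_right,
        real_inner_smul_right, hcomm]
      ring
    linarith [e1 ▸ h0]
  have hd := discrim_le_zero key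
  rw [discrim] at hd
  nlinarith [hd]


lemma ispalm_arith1 {C e th q : ℝ} (hC : 1 ≤ C) (he : 0 ≤ e) (hth : 0 ≤ th) (hq : 0 ≤ q)
    (h : q ≤ C * (th + 2 * e * Real.sqrt q)) :
    Real.sqrt q ≤ 2 * C * e + Real.sqrt C * Real.sqrt th := by
  have hC0 : 0 ≤ C := by linarith
  have hu0 : 0 ≤ Real.sqrt q := Real.sqrt_nonneg _
  have hu2 : Real.sqrt q * Real.sqrt q = q := Real.mul_self_sqrt hq
  have ha0 : 0 ≤ Real.sqrt C * Real.sqrt th :=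
    mul_nonneg (Real.sqrt_nonneg _) (Real.sqrt_nonneg _)
  have ha2 : (Real.sqrt C * Real.sqrt th) * (Real.sqrt C * Real.sqrt th) = C * th := by
    rw [show (Real.sqrt C * Real.sqrt th) * (Real.sqrt C * Real.sqrt th)
      = (Real.sqrt C * Real.sqrt C) * (Real.sqrt th * Real.sqrt th) by ring,
      Real.mul_self_sqrt hC0, Real.mul_self_sqrt hth]
  by_contra hcon
  push_neg at hcon
  have hupos : 0 < Real.sqrt q := by
    have h2 : (0:ℝ) ≤ 2 * C * e := by positivity
    linarith
  nlinarith [mul_lt_mul_of_pos_right hcon hupos, mul_le_mul_of_nonneg_left hcon.le ha0,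
    mul_nonneg (mul_nonneg (mul_nonneg (by norm_num : (0:ℝ) ≤ 2) hC0) he) ha0]

lemma ispalm_arith2 {C e th th' q : ℝ} (hC : 1 ≤ C) (he : 0 ≤ e) (hth : 0 ≤ th)
    (hth' : 0 ≤ th') (hq : 0 ≤ q)
    (h1 : th' ≤ th + 2 * e * Real.sqrt q)
    (h2 : Real.sqrt q ≤ 2 * C * e + Real.sqrt C * Real.sqrt th) :
    Real.sqrt th' ≤ Real.sqrt th + 3 * Real.sqrt C * e := by
  have hC0 : 0 ≤ C := by linarith
  have hsC : Real.sqrt C * Real.sqrt C = C := Real.mul_self_sqrt hC0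
  have hsθ : Real.sqrt th * Real.sqrt th = th := Real.mul_self_sqrt hth
  have h3 : th' ≤ (Real.sqrt th + 3 * Real.sqrt C * e) ^ 2 := by
    nlinarith [Real.sqrt_nonneg th, Real.sqrt_nonneg C, hsC, hsθ, he,
      mul_nonneg (mul_nonneg (Real.sqrt_nonneg C) he) (Real.sqrt_nonneg th),
      mul_nonneg hC0 (mul_nonneg he he)]
  calc Real.sqrt th' ≤ Real.sqrt ((Real.sqrt th + 3 * Real.sqrt C * e) ^ 2) :=
        Real.sqrt_le_sqrt h3
    _ = _ := Real.sqrt_sq (by nlinarith [Real.sqrt_nonneg th, Real.sqrt_nonneg C, he])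

lemma ispalm_step
    {V X : Type*} [NormedAddCommGroup V] [InnerProductSpace ℝ V] [FiniteDimensional ℝ V]
    [NormedAddCommGroup X] [InnerProductSpace ℝ X] [FiniteDimensional ℝ X]
    (g : V → EReal)
    (G : X →ₗ[ℝ] V) (c : X) (σ τ : ℝ) (hσ : 0 < σ) (hτ : 0 < τ ∧ τ < 2)
    (Sg : V →ₗ[ℝ] V)
    (hSg_bound : ∀ v vtil ζ ζ', ζ ∈ SubdiffAt g v → ζ' ∈ SubdiffAt g vtil →
      ⟪v - vtil, Sg (v - vtil)⟫ ≤ ⟪ζ - ζ', v - vtil⟫)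
    (T : V →ₗ[ℝ] V) (hT_sym : LinearMap.IsSymmetric T)
    (N : V →ₗ[ℝ] V)
    (Ninvhalf : V →ₗ[ℝ] V) (hNih_sym : LinearMap.IsSymmetric Ninvhalf)
    (hNih_sq : Ninvhalf ∘ₗ Ninvhalf ∘ₗ N = LinearMap.id)
    (ε : ℕ → ℝ)
    (v : ℕ → V) (x : ℕ → X) (d : ℕ → V)
    (hd_mem : ∀ k, d k - G (x k) - σ • G (LinearMap.adjoint G (v (k + 1)) - c)
      - T (v (k + 1) - v k) ∈ SubdiffAt g (v (k + 1)))
    (hd_small : ∀ k, ‖Ninvhalf (d k)‖ ≤ ε k)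
    (hx_update : ∀ k, x (k + 1) = x k + (τ * σ) • (LinearMap.adjoint G (v (k + 1)) - c))
    (vb : V) (xb : X) (hvb : -(G xb) ∈ SubdiffAt g vb) (hxb : LinearMap.adjoint G vb = c)
    (k : ℕ) :
    (1 / (τ * σ)) * ‖x (k + 1) - xb‖ ^ 2 + ⟪v (k + 1) - vb, T (v (k + 1) - vb)⟫
      + (2 * ⟪v (k + 1) - vb, Sg (v (k + 1) - vb)⟫
        + (2 - τ) * σ * ⟪LinearMap.adjoint G (v (k + 1)) - c, LinearMap.adjoint G (v (k + 1)) - c⟫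
        + ⟪v (k + 1) - v k, T (v (k + 1) - v k)⟫)
    ≤ (1 / (τ * σ)) * ‖x k - xb‖ ^ 2 + ⟪v k - vb, T (v k - vb)⟫
      + 2 * ε k * Real.sqrt ⟪v (k + 1) - vb, N (v (k + 1) - vb)⟫ := by
  obtain ⟨hτ0, hτ2⟩ := hτ
  have ht : 0 < τ * σ := mul_pos hτ0 hσ
  have hadj : ∀ (y : X) (u : V), ⟪G y, u⟫ = ⟪y, LinearMap.adjoint G u⟫ := fun y u => by
    rw [real_inner_comm, ← LinearMap.adjoint_inner_left, real_inner_comm]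
  have hcommT : ∀ p q : V, ⟪p, T q⟫ = ⟪q, T p⟫ := fun p q => by
    rw [← hT_sym p q, real_inner_comm]
  set Δv := v (k + 1) - vb with hΔv
  set w := v (k + 1) - v k with hw
  set r := LinearMap.adjoint G (v (k + 1)) - c with hr
  have hrΔ : r = LinearMap.adjoint G Δv := by rw [hr, hΔv, map_sub, hxb]
  -- Cauchy-Schwarz for the error term
  have hcs : ⟪d k, Δv⟫ ≤ ε k * Real.sqrt ⟪Δv, N Δv⟫ := by
    have hu : Ninvhalf (Ninvhalf (N Δv)) = Δv := by
      have := DFunLike.congr_fun hNih_sq Δv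
      simpa [LinearMap.comp_apply] using this
    have h1 : ⟪d k, Δv⟫ = ⟪Ninvhalf (d k), Ninvhalf (N Δv)⟫ := by
      conv_lhs => rw [← hu]
      rw [← hNih_sym]
    have h2 : ‖Ninvhalf (N Δv)‖ ^ 2 = ⟪Δv, N Δv⟫ := by
      rw [← real_inner_self_eq_norm_sq, hNih_sym, hu, real_inner_comm]
    have h3 : ‖Ninvhalf (N Δv)‖ = Real.sqrt ⟪Δv, N Δv⟫ := by
      rw [← h2, Real.sqrt_sq (norm_nonneg _)]
    calc ⟪d k, Δv⟫ = ⟪Ninvhalf (d k), Ninvhalf (N Δv)⟫ := h1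
      _ ≤ ‖Ninvhalf (d k)‖ * ‖Ninvhalf (N Δv)‖ := real_inner_le_norm _ _
      _ ≤ ε k * Real.sqrt ⟪Δv, N Δv⟫ := by
          rw [h3]; exact mul_le_mul_of_nonneg_right (hd_small k) (Real.sqrt_nonneg _)
  -- monotonicity
  have hmono := hSg_bound (v (k + 1)) vb _ _ (hd_mem k) hvb
  have hexp : (d k - G (x k) - σ • G r - T w) - (-(G xb))
      = d k - G (x k - xb) - σ • G r - T w := by
    rw [map_sub G (x k) xb]; abel
  have hin : ⟪d k - G (x k - xb) - σ • G r - T w, Δv⟫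
      = ⟪d k, Δv⟫ - ⟪x k - xb, r⟫ - σ * ⟪r, r⟫ - ⟪T w, Δv⟫ := by
    rw [inner_sub_left, inner_sub_left, inner_sub_left, real_inner_smul_left,
      hadj (x k - xb) Δv, hadj r Δv, ← hrΔ]
  have hmono' : ⟪Δv, Sg Δv⟫ ≤ ⟪d k, Δv⟫ - ⟪x k - xb, r⟫ - σ * ⟪r, r⟫ - ⟪T w, Δv⟫ := by
    rw [← hin, ← hexp]; exact hmono
  -- x update
  have hxk : x (k + 1) - xb = (x k - xb) + (τ * σ) • r := by rw [hx_update k]; abel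
  have hx2 : ‖x (k + 1) - xb‖ ^ 2
      = ‖x k - xb‖ ^ 2 + 2 * (τ * σ) * ⟪x k - xb, r⟫ + (τ * σ) ^ 2 * ⟪r, r⟫ := by
    rw [hxk, norm_add_sq_real, real_inner_smul_right, norm_smul, mul_pow,
      Real.norm_eq_abs, sq_abs, real_inner_self_eq_norm_sq]
    ring
  have hx3 : (1 / (τ * σ)) * ‖x (k + 1) - xb‖ ^ 2
      = (1 / (τ * σ)) * ‖x k - xb‖ ^ 2 + 2 * ⟪x k - xb, r⟫ + (τ * σ) * ⟪r, r⟫ := by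
    rw [hx2]; field_simp
  -- T identity
  have hTid : ⟪T w, Δv⟫
      = (⟪Δv, T Δv⟫ - ⟪v k - vb, T (v k - vb)⟫ + ⟪w, T w⟫) / 2 := by
    have hab : Δv - (v k - vb) = w := by rw [hΔv, hw]; abel
    have e : ⟪Δv - (v k - vb), T (Δv - (v k - vb))⟫
        = ⟪Δv, T Δv⟫ - ⟪Δv, T (v k - vb)⟫ - ⟪v k - vb, T Δv⟫ + ⟪v k - vb, T (v k - vb)⟫ := by
      rw [map_sub, inner_sub_left, inner_sub_right, inner_sub_right]; ring
    have e2 : ⟪T (Δv - (v k - vb)), Δv⟫ = ⟪Δv, T Δv⟫ - ⟪Δv, T (v k - vb)⟫ := by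
      rw [map_sub, inner_sub_left, real_inner_comm (T Δv) Δv,
        real_inner_comm (T (v k - vb)) Δv]
    rw [← hab, e, e2, hcommT (v k - vb) Δv]
    ring
  have hts : (τ * σ) * ⟪r, r⟫ + (2 - τ) * σ * ⟪r, r⟫ - 2 * σ * ⟪r, r⟫ = 0 := by ring
  linarith [hmono', hx3, hTid, hcs, hts]


set_option maxHeartbeats 1000000 in
lemma ispalm_main
    {V X : Type*} [NormedAddCommGroup V] [InnerProductSpace ℝ V] [FiniteDimensional ℝ V]
    [NormedAddCommGroup X] [InnerProductSpace ℝ X] [FiniteDimensional ℝ X]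
    (g : V → EReal)
    (G : X →ₗ[ℝ] V) (c : X) (σ τ : ℝ) (hσ : 0 < σ) (hτ : 0 < τ ∧ τ < 2)
    (Sg : V →ₗ[ℝ] V) (hSg_psd : ∀ u, 0 ≤ ⟪u, Sg u⟫)
    (hSg_bound : ∀ v vtil ζ ζ', ζ ∈ SubdiffAt g v → ζ' ∈ SubdiffAt g vtil →
      ⟪v - vtil, Sg (v - vtil)⟫ ≤ ⟪ζ - ζ', v - vtil⟫)
    (T : V →ₗ[ℝ] V) (hT_sym : LinearMap.IsSymmetric T) (hT_psd : ∀ u, 0 ≤ ⟪u, T u⟫)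
    (N : V →ₗ[ℝ] V) (hN : N = Sg + T + σ • (G ∘ₗ LinearMap.adjoint G))
    (Ninvhalf : V →ₗ[ℝ] V) (hNih_sym : LinearMap.IsSymmetric Ninvhalf)
    (hNih_sq : Ninvhalf ∘ₗ Ninvhalf ∘ₗ N = LinearMap.id)
    (ε : ℕ → ℝ) (hε_nonneg : ∀ k, 0 ≤ ε k) (hε_sum : Summable ε)
    (v : ℕ → V) (x : ℕ → X) (d : ℕ → V)
    (hd_mem : ∀ k, d k - G (x k) - σ • G (LinearMap.adjoint G (v (k + 1)) - c)
      - T (v (k + 1) - v k) ∈ SubdiffAt g (v (k + 1)))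
    (hd_small : ∀ k, ‖Ninvhalf (d k)‖ ≤ ε k)
    (hx_update : ∀ k, x (k + 1) = x k + (τ * σ) • (LinearMap.adjoint G (v (k + 1)) - c))
    (vb : V) (xb : X) (hvb : -(G xb) ∈ SubdiffAt g vb) (hxb : LinearMap.adjoint G vb = c) :
    ∃ B L : ℝ,
      (∀ k, (1 / (τ * σ)) * ‖x k - xb‖ ^ 2 + ⟪v k - vb, T (v k - vb)⟫ ≤ B) ∧
      (∀ k, ⟪v (k + 1) - vb, N (v (k + 1) - vb)⟫ ≤ B) ∧
      Tendsto (fun k => 2 * ⟪v (k + 1) - vb, Sg (v (k + 1) - vb)⟫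
          + (2 - τ) * σ * ⟪LinearMap.adjoint G (v (k + 1)) - c, LinearMap.adjoint G (v (k + 1)) - c⟫
          + ⟪v (k + 1) - v k, T (v (k + 1) - v k)⟫) atTop (nhds 0) ∧
      Tendsto (fun k => (1 / (τ * σ)) * ‖x k - xb‖ ^ 2 + ⟪v k - vb, T (v k - vb)⟫)
        atTop (nhds L) ∧
      (∀ k, ⟪v (k + 1) - vb, N (v (k + 1) - vb)⟫
        ≤ (1 + 1 / (2 - τ)) * ((2 * ⟪v (k + 1) - vb, Sg (v (k + 1) - vb)⟫
          + (2 - τ) * σ * ⟪LinearMap.adjoint G (v (k + 1)) - c, LinearMap.adjoint G (v (k + 1)) - c⟫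
          + ⟪v (k + 1) - v k, T (v (k + 1) - v k)⟫)
          + ((1 / (τ * σ)) * ‖x (k + 1) - xb‖ ^ 2 + ⟪v (k + 1) - vb, T (v (k + 1) - vb)⟫))) := by
  obtain ⟨hτ0, hτ2⟩ := hτ
  have ht : 0 < τ * σ := mul_pos hτ0 hσ
  have h2τ : 0 < 2 - τ := by linarith
  set Cst : ℝ := 1 + 1 / (2 - τ) with hCst_def
  clear_value Cst
  have hi : 0 < 1 / (2 - τ) := by positivity
  have hCst1 : 1 ≤ Cst := by rw [hCst_def]; linarith
  have hCst0 : 0 ≤ Cst := by linarith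
  have hadj : ∀ (y : X) (u : V), ⟪G y, u⟫ = ⟪y, LinearMap.adjoint G u⟫ := fun y u => by
    rw [real_inner_comm, ← LinearMap.adjoint_inner_left, real_inner_comm]
  have hqN : ∀ u : V, ⟪u, N u⟫ = ⟪u, Sg u⟫ + ⟪u, T u⟫
      + σ * ⟪LinearMap.adjoint G u, LinearMap.adjoint G u⟫ := by
    intro u
    rw [hN]
    simp only [LinearMap.add_apply, LinearMap.smul_apply, LinearMap.comp_apply,
      inner_add_right, real_inner_smul_right]
    have h9 : ⟪u, G (LinearMap.adjoint G u)⟫ = ⟪LinearMap.adjoint G u, LinearMap.adjoint G u⟫ := by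
      rw [real_inner_comm]; exact hadj _ u
    rw [h9]
  have hqN0 : ∀ u : V, 0 ≤ ⟪u, N u⟫ := by
    intro u
    rw [hqN u]
    have h1 := real_inner_self_nonneg (x := LinearMap.adjoint G u)
    have h2 := hSg_psd u; have h3 := hT_psd u
    positivity
  set θ : ℕ → ℝ := fun k => (1 / (τ * σ)) * ‖x k - xb‖ ^ 2 + ⟪v k - vb, T (v k - vb)⟫ with hθdef
  set δ : ℕ → ℝ := fun k => 2 * ⟪v (k + 1) - vb, Sg (v (k + 1) - vb)⟫
      + (2 - τ) * σ * ⟪LinearMap.adjoint G (v (k + 1)) - c, LinearMap.adjoint G (v (k + 1)) - c⟫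
      + ⟪v (k + 1) - v k, T (v (k + 1) - v k)⟫ with hδdef
  set q : ℕ → ℝ := fun k => ⟪v (k + 1) - vb, N (v (k + 1) - vb)⟫ with hqdef
  clear_value θ δ q
  have hθ0 : ∀ k, 0 ≤ θ k := by
    intro k
    have h1 : (0:ℝ) ≤ (1 / (τ * σ)) * ‖x k - xb‖ ^ 2 := by positivity
    have h2 := hT_psd (v k - vb)
    simp only [hθdef]; linarith
  have hδ0 : ∀ k, 0 ≤ δ k := by
    intro k
    have h1 := hSg_psd (v (k + 1) - vb)
    have h2 := real_inner_self_nonneg (x := LinearMap.adjoint G (v (k + 1)) - c)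
    have h3 := hT_psd (v (k + 1) - v k)
    have h4 : (0:ℝ) ≤ (2 - τ) * σ * ⟪LinearMap.adjoint G (v (k + 1)) - c,
        LinearMap.adjoint G (v (k + 1)) - c⟫ := by positivity
    simp only [hδdef]; linarith
  have hq0 : ∀ k, 0 ≤ q k := by intro k; rw [hqdef]; exact hqN0 _
  have hstep : ∀ k, θ (k + 1) + δ k ≤ θ k + 2 * ε k * Real.sqrt (q k) := by
    intro k
    simp only [hθdef, hδdef, hqdef]
    exact ispalm_step g G c σ τ hσ ⟨hτ0, hτ2⟩ Sg hSg_bound T hT_sym N Ninvhalf hNih_sym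
      hNih_sq ε v x d hd_mem hd_small hx_update vb xb hvb hxb k
  have hqC : ∀ k, q k ≤ Cst * (δ k + θ (k + 1)) := by
    intro k
    have hq' : q k = ⟪v (k + 1) - vb, Sg (v (k + 1) - vb)⟫ + ⟪v (k + 1) - vb, T (v (k + 1) - vb)⟫
        + σ * ⟪LinearMap.adjoint G (v (k + 1)) - c, LinearMap.adjoint G (v (k + 1)) - c⟫ := by
      have hr : LinearMap.adjoint G (v (k + 1) - vb) = LinearMap.adjoint G (v (k + 1)) - c := by
        rw [map_sub, hxb]
      rw [hqdef]
      simp only []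
      rw [hqN (v (k + 1) - vb), hr]
    have h1 := hSg_psd (v (k + 1) - vb)
    have h2 := real_inner_self_nonneg (x := LinearMap.adjoint G (v (k + 1)) - c)
    have h3 := hT_psd (v (k + 1) - v k)
    have h4 : (0:ℝ) ≤ (1 / (τ * σ)) * ‖x (k + 1) - xb‖ ^ 2 := by positivity
    have h5 := hT_psd (v (k + 1) - vb)
    have hA1 : ⟪v (k + 1) - vb, Sg (v (k + 1) - vb)⟫ + ⟪v (k + 1) - vb, T (v (k + 1) - vb)⟫
        ≤ δ k + θ (k + 1) := by
      have h6 : (0:ℝ) ≤ (2 - τ) * σ * ⟪LinearMap.adjoint G (v (k + 1)) - c,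
          LinearMap.adjoint G (v (k + 1)) - c⟫ := by positivity
      simp only [hδdef, hθdef]; linarith
    have hA2 : σ * ⟪LinearMap.adjoint G (v (k + 1)) - c, LinearMap.adjoint G (v (k + 1)) - c⟫
        ≤ (1 / (2 - τ)) * (δ k + θ (k + 1)) := by
      have heq : σ * ⟪LinearMap.adjoint G (v (k + 1)) - c, LinearMap.adjoint G (v (k + 1)) - c⟫
          = (1 / (2 - τ)) * ((2 - τ) * σ * ⟪LinearMap.adjoint G (v (k + 1)) - c,
            LinearMap.adjoint G (v (k + 1)) - c⟫) := by
        field_simp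
      rw [heq]
      apply mul_le_mul_of_nonneg_left _ hi.le
      have h6 : (2 - τ) * σ * ⟪LinearMap.adjoint G (v (k + 1)) - c,
          LinearMap.adjoint G (v (k + 1)) - c⟫ ≤ δ k := by
        simp only [hδdef]; linarith
      linarith [hθ0 (k + 1), hδ0 k, h6]
    have hCm : Cst * (δ k + θ (k + 1)) = (δ k + θ (k + 1)) + (1 / (2 - τ)) * (δ k + θ (k + 1)) := by
      rw [hCst_def]; ring
    linarith [hA1, hA2, hq', hCm.ge, hCm.le]
  -- bounds
  set E : ℝ := ∑' k, ε k with hEdef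
  clear_value E
  have hE0 : 0 ≤ E := by rw [hEdef]; exact tsum_nonneg hε_nonneg
  have hεE : ∀ k, ε k ≤ E := by
    intro k; rw [hEdef]; exact Summable.le_tsum hε_sum k (fun j _ => hε_nonneg j)
  have hpartE : ∀ n, ∑ j ∈ Finset.range n, ε j ≤ E := by
    intro n; rw [hEdef]; exact Summable.sum_le_tsum _ (fun j _ => hε_nonneg j) hε_sum
  have hsC : Real.sqrt Cst * Real.sqrt Cst = Cst := Real.mul_self_sqrt hCst0
  have hsC1 : 1 ≤ Real.sqrt Cst := by
    rw [show (1:ℝ) = Real.sqrt 1 by simp]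
    exact Real.sqrt_le_sqrt hCst1
  have hU : ∀ k, Real.sqrt (q k) ≤ 2 * Cst * ε k + Real.sqrt Cst * Real.sqrt (θ k) := by
    intro k
    apply ispalm_arith1 hCst1 (hε_nonneg k) (hθ0 k) (hq0 k)
    have hs := hstep k
    have h2 : δ k + θ (k + 1) ≤ θ k + 2 * ε k * Real.sqrt (q k) := by linarith
    calc q k ≤ Cst * (δ k + θ (k + 1)) := hqC k
      _ ≤ _ := by
          apply mul_le_mul_of_nonneg_left _ hCst0
          linarith
  have hsqθ : ∀ k, Real.sqrt (θ (k + 1)) ≤ Real.sqrt (θ k) + 3 * Real.sqrt Cst * ε k := by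
    intro k
    apply ispalm_arith2 hCst1 (hε_nonneg k) (hθ0 k) (hθ0 (k + 1)) (hq0 k) _ (hU k)
    have hs := hstep k
    have hd := hδ0 k
    linarith
  set B1 : ℝ := Real.sqrt (θ 0) + 3 * Real.sqrt Cst * E with hB1def
  clear_value B1
  have hsθB : ∀ k, Real.sqrt (θ k) ≤ B1 := by
    intro k
    have key : ∀ n, Real.sqrt (θ n)
        ≤ Real.sqrt (θ 0) + 3 * Real.sqrt Cst * ∑ j ∈ Finset.range n, ε j := by
      intro n; induction n with
      | zero => simp
      | succ n ih =>
          rw [Finset.sum_range_succ]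
          have := hsqθ n
          have hexp : 3 * Real.sqrt Cst * (∑ j ∈ Finset.range n, ε j + ε n)
              = 3 * Real.sqrt Cst * ∑ j ∈ Finset.range n, ε j + 3 * Real.sqrt Cst * ε n := by
            ring
          rw [hexp]
          linarith
    have h2 : 3 * Real.sqrt Cst * ∑ j ∈ Finset.range k, ε j ≤ 3 * Real.sqrt Cst * E := by
      apply mul_le_mul_of_nonneg_left (hpartE k)
      positivity
    calc Real.sqrt (θ k) ≤ _ := key k
      _ ≤ B1 := by rw [hB1def]; linarith
  have hB10 : 0 ≤ B1 := le_trans (Real.sqrt_nonneg _) (hsθB 0)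
  have hθB : ∀ k, θ k ≤ B1 * B1 := by
    intro k
    nlinarith [hsθB k, Real.mul_self_sqrt (hθ0 k), Real.sqrt_nonneg (θ k)]
  set U : ℝ := 2 * Cst * E + Real.sqrt Cst * B1 with hUdef
  clear_value U
  have hU0 : 0 ≤ U := by
    rw [hUdef]
    have h1 : (0:ℝ) ≤ 2 * Cst * E := by positivity
    have h2 : (0:ℝ) ≤ Real.sqrt Cst * B1 := mul_nonneg (Real.sqrt_nonneg _) hB10
    linarith
  have hsqU : ∀ k, Real.sqrt (q k) ≤ U := by
    intro k
    have h1 := hU k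
    have h2 : 2 * Cst * ε k ≤ 2 * Cst * E := by
      apply mul_le_mul_of_nonneg_left (hεE k)
      positivity
    have h3 : Real.sqrt Cst * Real.sqrt (θ k) ≤ Real.sqrt Cst * B1 :=
      mul_le_mul_of_nonneg_left (hsθB k) (Real.sqrt_nonneg _)
    rw [hUdef]; linarith
  have hqB : ∀ k, q k ≤ U * U := by
    intro k
    nlinarith [hsqU k, Real.mul_self_sqrt (hq0 k), Real.sqrt_nonneg (q k)]
  -- summability of δ
  have hηstep : ∀ k, θ (k + 1) + δ k ≤ θ k + 2 * U * ε k := by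
    intro k
    have h1 := hstep k
    have h2 : 2 * ε k * Real.sqrt (q k) ≤ 2 * U * ε k := by
      nlinarith [hsqU k, hε_nonneg k, Real.sqrt_nonneg (q k)]
    linarith
  have hpartδ : ∀ n, ∑ j ∈ Finset.range n, δ j + θ n
      ≤ θ 0 + 2 * U * ∑ j ∈ Finset.range n, ε j := by
    intro n; induction n with
    | zero => simp
    | succ n ih =>
        rw [Finset.sum_range_succ, Finset.sum_range_succ]
        have h1 := hηstep n
        have hexp : 2 * U * (∑ j ∈ Finset.range n, ε j + ε n)
            = 2 * U * ∑ j ∈ Finset.range n, ε j + 2 * U * ε n := by ring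
        rw [hexp]
        linarith
  have hδsum : Summable δ := by
    apply summable_of_sum_range_le hδ0 (c := θ 0 + 2 * U * E)
    intro n
    have h1 := hpartδ n
    have h2 : 2 * U * ∑ j ∈ Finset.range n, ε j ≤ 2 * U * E := by
      apply mul_le_mul_of_nonneg_left (hpartE n)
      linarith
    linarith [hθ0 n]
  have hδ_tend : Tendsto δ atTop (nhds 0) := hδsum.tendsto_atTop_zero
  -- θ converges
  set η : ℕ → ℝ := fun k => 2 * U * ε k with hηdef
  clear_value η
  have hη_sum : Summable η := by rw [hηdef]; exact hε_sum.mul_left _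
  have hη0 : ∀ k, 0 ≤ η k := by
    intro k
    simp only [hηdef]
    have := hε_nonneg k
    nlinarith
  set tail : ℕ → ℝ := fun k => ∑' j, η (j + k) with htaildef
  clear_value tail
  have htailsum : ∀ k, Summable fun j => η (j + k) := fun k => (summable_nat_add_iff k).mpr hη_sum
  have htail0 : ∀ k, 0 ≤ tail k := by
    intro k; rw [htaildef]; exact tsum_nonneg (fun j => hη0 _)
  have htail_rec : ∀ k, tail k = η k + tail (k + 1) := by
    intro k
    have h1 := Summable.tsum_eq_zero_add (htailsum k)
    simp only [zero_add] at h1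
    have h2 : ∑' (j : ℕ), η (j + 1 + k) = ∑' (j : ℕ), η (j + (k + 1)) := by
      apply tsum_congr; intro j; congr 1; omega
    simp only [htaildef]
    rw [h1, h2]
  have hψanti : Antitone (fun k => θ k + tail k) := by
    apply antitone_nat_of_succ_le
    intro k
    have h1 := hηstep k
    have h2 := htail_rec k
    have h3 := hδ0 k
    simp only [hηdef] at h2
    linarith
  have hψbdd : BddBelow (Set.range fun k => θ k + tail k) :=
    ⟨0, by rintro z ⟨k, rfl⟩; exact add_nonneg (hθ0 k) (htail0 k)⟩
  have hψ := tendsto_atTop_ciInf hψanti hψbdd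
  have htail_tend : Tendsto tail atTop (nhds 0) := by
    have hsum : Tendsto (fun k => ∑ j ∈ Finset.range k, η j) atTop (nhds (∑' j, η j)) :=
      hη_sum.hasSum.tendsto_sum_nat
    have heq : tail = fun k => (∑' j, η j) - ∑ j ∈ Finset.range k, η j := by
      funext k
      have h1 := Summable.sum_add_tsum_nat_add k hη_sum
      simp only [htaildef]
      linarith
    rw [heq]
    have h2 := (tendsto_const_nhds (x := ∑' (j : ℕ), η j) (f := atTop)).sub hsum
    simpa using h2
  refine ⟨max (B1 * B1) (U * U), (⨅ k, (θ k + tail k)) - 0, fun k => ?_, fun k => ?_, ?_, ?_, fun k => ?_⟩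
  · have h := le_trans (hθB k) (le_max_left (B1 * B1) (U * U))
    rw [hθdef] at h; exact h
  · have h := le_trans (hqB k) (le_max_right (B1 * B1) (U * U))
    rw [hqdef] at h; exact h
  · exact hδ_tend
  · have h3 : Tendsto (fun k => (θ k + tail k) - tail k) atTop
        (nhds ((⨅ k, (θ k + tail k)) - 0)) := hψ.sub htail_tend
    have h4 : Tendsto θ atTop (nhds ((⨅ k, (θ k + tail k)) - 0)) := by
      have he : (fun k => (θ k + tail k) - tail k) = θ := by funext k; ring
      rwa [he] at h3
    exact h4
  · have h := hqC k
    rw [hθdef, hδdef, hqdef] at h; exact h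

set_option maxHeartbeats 1600000

/-- **Convergence of the inexact semi-proximal augmented Lagrangian method (isPALM,
Theorem 2.1).**  Assume the KKT solution set of problem (Aug) `min {g(v) : G*v = c}` is
nonempty and `N := Σ_g + T + σGG*` is positive definite.  Let `{(v^k, x^k)}` be any
sequence generated by Algorithm isPALM, i.e. satisfying the inexact optimality inclusion
`d^k ∈ ∂g(v^{k+1}) + Gx^k + σG(G*v^{k+1} − c) + T(v^{k+1} − v^k)` with
`‖N^{−1/2}d^k‖ ≤ ε_k`, `Σ_k ε_k < ∞`, and the multiplier update
`x^{k+1} = x^k + τσ(G*v^{k+1} − c)` with `τ ∈ (0,2)`.  Then: (a) the sequence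
`{(v^k, x^k)}` is bounded; (b) every accumulation point of `{(v^k, x^k)}` solves the KKT
system of (Aug); (c) the whole sequence converges to a solution of the KKT system. -/
theorem ispalm_convergence
    {V X : Type*} [NormedAddCommGroup V] [InnerProductSpace ℝ V] [FiniteDimensional ℝ V]
    [NormedAddCommGroup X] [InnerProductSpace ℝ X] [FiniteDimensional ℝ X]
    (g : V → EReal)
    (hg_proper : (∀ v, g v ≠ ⊥) ∧ ∃ v, g v ≠ ⊤)
    (hg_convex : Convex ℝ {pr : V × ℝ | g pr.1 ≤ (pr.2 : EReal)})
    (hg_closed : LowerSemicontinuous g)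
    (G : X →ₗ[ℝ] V) (c : X) (σ τ : ℝ) (hσ : 0 < σ) (hτ : 0 < τ ∧ τ < 2)
    (Sg : V →ₗ[ℝ] V) (hSg_sym : LinearMap.IsSymmetric Sg) (hSg_psd : ∀ u, 0 ≤ ⟪u, Sg u⟫)
    (hSg_bound : ∀ v vtil ζ ζ', ζ ∈ SubdiffAt g v → ζ' ∈ SubdiffAt g vtil →
      ⟪v - vtil, Sg (v - vtil)⟫ ≤ ⟪ζ - ζ', v - vtil⟫)
    (T : V →ₗ[ℝ] V) (hT_sym : LinearMap.IsSymmetric T) (hT_psd : ∀ u, 0 ≤ ⟪u, T u⟫)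
    (N : V →ₗ[ℝ] V) (hN : N = Sg + T + σ • (G ∘ₗ LinearMap.adjoint G))
    (hN_pd : ∀ u : V, u ≠ 0 → 0 < ⟪u, N u⟫)
    -- `Ninvhalf` is the operator `N^{−1/2}`: the (unique) symmetric positive semidefinite
    -- operator whose square is the inverse of `N`.
    (Ninvhalf : V →ₗ[ℝ] V) (hNih_sym : LinearMap.IsSymmetric Ninvhalf)
    (hNih_psd : ∀ u, 0 ≤ ⟪u, Ninvhalf u⟫)
    (hNih_sq : Ninvhalf ∘ₗ Ninvhalf ∘ₗ N = LinearMap.id)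
    (ε : ℕ → ℝ) (hε_nonneg : ∀ k, 0 ≤ ε k) (hε_sum : Summable ε)
    -- the KKT system of (Aug)
    (KKT : V × X → Prop)
    (hKKT : KKT = fun pr : V × X =>
      -(G pr.2) ∈ SubdiffAt g pr.1 ∧ LinearMap.adjoint G pr.1 = c)
    (hKKT_nonempty : ∃ pr, KKT pr)
    -- the isPALM iterates
    (v : ℕ → V) (x : ℕ → X) (d : ℕ → V)
    (hd_mem : ∀ k, d k - G (x k) - σ • G (LinearMap.adjoint G (v (k + 1)) - c)
      - T (v (k + 1) - v k) ∈ SubdiffAt g (v (k + 1)))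
    (hd_small : ∀ k, ‖Ninvhalf (d k)‖ ≤ ε k)
    (hx_update : ∀ k, x (k + 1) = x k + (τ * σ) • (LinearMap.adjoint G (v (k + 1)) - c)) :
    (∃ R : ℝ, ∀ k, ‖v k‖ ≤ R ∧ ‖x k‖ ≤ R) ∧
    (∀ pr : V × X, MapClusterPt pr atTop (fun k => (v k, x k)) → KKT pr) ∧
    (∃ pr : V × X, KKT pr ∧ Tendsto (fun k => (v k, x k)) atTop (nhds pr)) := by
  obtain ⟨hτ0, hτ2⟩ := hτ
  have ht : 0 < τ * σ := mul_pos hτ0 hσ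
  have h2τ : 0 < 2 - τ := by linarith
  obtain ⟨⟨vb0, xb0⟩, hkkt0⟩ := hKKT_nonempty
  rw [hKKT] at hkkt0
  obtain ⟨hvb0, hxb0⟩ := hkkt0
  -- smallest eigenvalue bound for N
  have hlam : ∃ lam : ℝ, 0 < lam ∧ ∀ u : V, lam * ‖u‖ ^ 2 ≤ ⟪u, N u⟫ := by
    rcases subsingleton_or_nontrivial V with hV | hV
    · refine ⟨1, one_pos, fun u => ?_⟩
      rw [Subsingleton.elim u 0]
      simp
    · have hne : (Metric.sphere (0 : V) 1).Nonempty := NormedSpace.sphere_nonempty.mpr zero_le_one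
      have hcont : Continuous fun u : V => ⟪u, N u⟫ :=
        continuous_id.inner (N.continuous_of_finiteDimensional)
      obtain ⟨u₀, hu₀mem, hu₀min⟩ :=
        (isCompact_sphere (0 : V) 1).exists_isMinOn hne hcont.continuousOn
      have hu₀norm : ‖u₀‖ = 1 := by simpa using hu₀mem
      have hu₀ne : u₀ ≠ 0 := by
        intro h; rw [h] at hu₀norm; simp at hu₀norm
      refine ⟨⟪u₀, N u₀⟫, hN_pd u₀ hu₀ne, fun u => ?_⟩
      rcases eq_or_ne u 0 with rfl | hu
      · simp
      · have hn : ‖u‖ ≠ 0 := norm_ne_zero_iff.mpr hu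
        have hn0 : 0 < ‖u‖ := norm_pos_iff.mpr hu
        have hmem : (‖u‖⁻¹ • u) ∈ Metric.sphere (0 : V) 1 := by
          simp [norm_smul, abs_of_nonneg (inv_nonneg.mpr (norm_nonneg u)),
            inv_mul_cancel₀ hn]
        have hm := (isMinOn_iff.mp hu₀min) _ hmem
        have hsc : ⟪‖u‖⁻¹ • u, N (‖u‖⁻¹ • u)⟫ = (‖u‖⁻¹) ^ 2 * ⟪u, N u⟫ := by
          rw [map_smul, real_inner_smul_left, real_inner_smul_right]; ring
        rw [hsc] at hm
        have h2 : ⟪u₀, N u₀⟫ * ‖u‖ ^ 2 ≤ (‖u‖⁻¹) ^ 2 * ⟪u, N u⟫ * ‖u‖ ^ 2 :=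
          mul_le_mul_of_nonneg_right hm (by positivity)
        have h3 : (‖u‖⁻¹) ^ 2 * ⟪u, N u⟫ * ‖u‖ ^ 2 = ⟪u, N u⟫ := by
          field_simp
        linarith [h2, h3.le, h3.ge]
  obtain ⟨lam, hlam0, hlamle⟩ := hlam
  -- first application of the key estimates, with the given KKT point
  obtain ⟨B0, L0, hθB0, hqB0, hδt0, hθt0, hqC0⟩ :=
    ispalm_main g G c σ τ hσ ⟨hτ0, hτ2⟩ Sg hSg_psd hSg_bound T hT_sym hT_psd N hN
      Ninvhalf hNih_sym hNih_sq ε hε_nonneg hε_sum v x d hd_mem hd_small hx_update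
      vb0 xb0 hvb0 hxb0
  have hB00 : 0 ≤ B0 := by
    have h1 := hθB0 0
    have h2 : (0:ℝ) ≤ (1 / (τ * σ)) * ‖x 0 - xb0‖ ^ 2 := by positivity
    have h3 := hT_psd (v 0 - vb0)
    linarith
  -- part (a): boundedness
  have hxbd : ∀ k, ‖x k‖ ≤ ‖xb0‖ + Real.sqrt (τ * σ * B0) := by
    intro k
    have h1 := hθB0 k
    have h3 := hT_psd (v k - vb0)
    have h4 : ‖x k - xb0‖ ^ 2 ≤ τ * σ * B0 := by
      have h5 : (1 / (τ * σ)) * ‖x k - xb0‖ ^ 2 ≤ B0 := by linarith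
      have h6 := mul_le_mul_of_nonneg_left h5 ht.le
      calc ‖x k - xb0‖ ^ 2 = (τ * σ) * ((1 / (τ * σ)) * ‖x k - xb0‖ ^ 2) := by
            field_simp
        _ ≤ (τ * σ) * B0 := h6
        _ = τ * σ * B0 := by ring
    have h7 : ‖x k - xb0‖ ≤ Real.sqrt (τ * σ * B0) := by
      rw [← Real.sqrt_sq (norm_nonneg (x k - xb0))]
      exact Real.sqrt_le_sqrt h4
    have h8 := norm_add_le (x k - xb0) xb0
    rw [sub_add_cancel] at h8
    linarith
  have hvbd1 : ∀ k, ‖v (k + 1)‖ ≤ ‖vb0‖ + Real.sqrt (B0 / lam) := by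
    intro k
    have h1 := hqB0 k
    have h2 := hlamle (v (k + 1) - vb0)
    have h4 : ‖v (k + 1) - vb0‖ ^ 2 ≤ B0 / lam := by
      rw [le_div_iff₀ hlam0]
      nlinarith
    have h7 : ‖v (k + 1) - vb0‖ ≤ Real.sqrt (B0 / lam) := by
      rw [← Real.sqrt_sq (norm_nonneg (v (k + 1) - vb0))]
      exact Real.sqrt_le_sqrt h4
    have h8 := norm_add_le (v (k + 1) - vb0) vb0
    rw [sub_add_cancel] at h8
    linarith
  set R : ℝ := max (max (‖v 0‖) (‖vb0‖ + Real.sqrt (B0 / lam)))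
      (‖xb0‖ + Real.sqrt (τ * σ * B0)) with hRdef
  have hRof : ∀ k, ‖v k‖ ≤ R ∧ ‖x k‖ ≤ R := by
    intro k
    constructor
    · rcases k with _ | k
      · exact le_trans (le_max_left _ _) (le_max_left _ _)
      · exact le_trans (hvbd1 k) (le_trans (le_max_right _ _) (le_max_left _ _))
    · exact le_trans (hxbd k) (le_max_right _ _)
  -- reference-free limits
  have hp0 : Tendsto (fun k => ⟪LinearMap.adjoint G (v (k + 1)) - c,
      LinearMap.adjoint G (v (k + 1)) - c⟫) atTop (nhds 0) := by
    have hb : ∀ k, ⟪LinearMap.adjoint G (v (k + 1)) - c, LinearMap.adjoint G (v (k + 1)) - c⟫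
        ≤ (1 / ((2 - τ) * σ)) * (2 * ⟪v (k + 1) - vb0, Sg (v (k + 1) - vb0)⟫
          + (2 - τ) * σ * ⟪LinearMap.adjoint G (v (k + 1)) - c, LinearMap.adjoint G (v (k + 1)) - c⟫
          + ⟪v (k + 1) - v k, T (v (k + 1) - v k)⟫) := by
      intro k
      have h1 := hSg_psd (v (k + 1) - vb0)
      have h3 := hT_psd (v (k + 1) - v k)
      have h2 := real_inner_self_nonneg (x := LinearMap.adjoint G (v (k + 1)) - c)
      have hpos : 0 < (2 - τ) * σ := mul_pos h2τ hσ
      have hfac : (0:ℝ) ≤ 1 / ((2 - τ) * σ) := by positivity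
      have h7 : (2 - τ) * σ * ⟪LinearMap.adjoint G (v (k + 1)) - c,
          LinearMap.adjoint G (v (k + 1)) - c⟫
          ≤ (2 * ⟪v (k + 1) - vb0, Sg (v (k + 1) - vb0)⟫
          + (2 - τ) * σ * ⟪LinearMap.adjoint G (v (k + 1)) - c, LinearMap.adjoint G (v (k + 1)) - c⟫
          + ⟪v (k + 1) - v k, T (v (k + 1) - v k)⟫) := by linarith
      calc ⟪LinearMap.adjoint G (v (k + 1)) - c, LinearMap.adjoint G (v (k + 1)) - c⟫
          = (1 / ((2 - τ) * σ)) * ((2 - τ) * σ * ⟪LinearMap.adjoint G (v (k + 1)) - c,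
            LinearMap.adjoint G (v (k + 1)) - c⟫) := by field_simp
        _ ≤ _ := mul_le_mul_of_nonneg_left h7 hfac
    apply squeeze_zero (fun k => real_inner_self_nonneg) hb
    have := hδt0.const_mul (1 / ((2 - τ) * σ))
    simpa using this
  have hqw0 : Tendsto (fun k => ⟪v (k + 1) - v k, T (v (k + 1) - v k)⟫) atTop (nhds 0) := by
    apply squeeze_zero (fun k => hT_psd _) (g := fun k =>
      2 * ⟪v (k + 1) - vb0, Sg (v (k + 1) - vb0)⟫
        + (2 - τ) * σ * ⟪LinearMap.adjoint G (v (k + 1)) - c, LinearMap.adjoint G (v (k + 1)) - c⟫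
        + ⟪v (k + 1) - v k, T (v (k + 1) - v k)⟫) _ hδt0
    intro k
    have h1 := hSg_psd (v (k + 1) - vb0)
    have h2 := real_inner_self_nonneg (x := LinearMap.adjoint G (v (k + 1)) - c)
    have hpos : 0 ≤ (2 - τ) * σ := (mul_pos h2τ hσ).le
    beta_reduce
    nlinarith [mul_nonneg hpos h2]
  have hr0 : Tendsto (fun k => LinearMap.adjoint G (v (k + 1)) - c) atTop (nhds 0) := by
    rw [tendsto_zero_iff_norm_tendsto_zero]
    have heq : (fun k => ‖LinearMap.adjoint G (v (k + 1)) - c‖)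
        = fun k => Real.sqrt ⟪LinearMap.adjoint G (v (k + 1)) - c,
            LinearMap.adjoint G (v (k + 1)) - c⟫ := by
      funext k
      rw [real_inner_self_eq_norm_sq, Real.sqrt_sq (norm_nonneg _)]
    rw [heq]
    have := (Real.continuous_sqrt.tendsto' 0 0 Real.sqrt_zero).comp hp0
    exact this
  have hTw0 : Tendsto (fun k => T (v (k + 1) - v k)) atTop (nhds 0) := by
    set Tc : V →L[ℝ] V := LinearMap.toContinuousLinearMap T with hTcdef
    have hTcz : ∀ z, T z = Tc z := fun z => rfl
    clear_value Tc
    have hTz2 : ∀ z : V, ‖T z‖ ^ 2 ≤ ‖Tc‖ * ⟪z, T z⟫ := by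
      intro z
      have hcs := psd_cauchy T hT_sym hT_psd (T z) z
      have h1 : ⟪T z, T z⟫ = ‖T z‖ ^ 2 := real_inner_self_eq_norm_sq _
      have h2 : ⟪T z, T (T z)⟫ ≤ ‖T z‖ * ‖T (T z)‖ := real_inner_le_norm _ _
      have h3 : ‖T (T z)‖ ≤ ‖Tc‖ * ‖T z‖ := by
        rw [hTcz (T z)]; exact Tc.le_opNorm _
      have h4 : 0 ≤ ‖T z‖ := norm_nonneg _
      have h5 : 0 ≤ ‖Tc‖ := norm_nonneg _
      have h6 := hT_psd z
      have c1 : ⟪T z, T (T z)⟫ ≤ ‖Tc‖ * (‖T z‖ * ‖T z‖) := by nlinarith [h2, h3, h4]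
      have c2 : ⟪T z, T z⟫ ^ 2 ≤ ‖Tc‖ * (‖T z‖ * ‖T z‖) * ⟪z, T z⟫ :=
        le_trans hcs (mul_le_mul_of_nonneg_right c1 h6)
      rw [h1] at c2
      rcases eq_or_lt_of_le h4 with h7 | h7
      · rw [← h7]; simpa using mul_nonneg h5 h6
      · nlinarith [c2, mul_pos h7 h7]
    rw [tendsto_zero_iff_norm_tendsto_zero]
    apply squeeze_zero (fun k => norm_nonneg _)
      (g := fun k => Real.sqrt (‖Tc‖ * ⟪v (k + 1) - v k, T (v (k + 1) - v k)⟫))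
    · intro k
      rw [← Real.sqrt_sq (norm_nonneg (T (v (k + 1) - v k)))]
      exact Real.sqrt_le_sqrt (hTz2 _)
    · have h8 : Tendsto (fun k => ‖Tc‖ * ⟪v (k + 1) - v k, T (v (k + 1) - v k)⟫)
          atTop (nhds 0) := by
        have := hqw0.const_mul ‖Tc‖
        simpa using this
      have := (Real.continuous_sqrt.tendsto' 0 0 Real.sqrt_zero).comp h8
      exact this
  have hd0 : Tendsto d atTop (nhds 0) := by
    have hMd : Tendsto (fun k => Ninvhalf (d k)) atTop (nhds 0) := by
      rw [tendsto_zero_iff_norm_tendsto_zero]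
      exact squeeze_zero (fun k => norm_nonneg _) hd_small hε_sum.tendsto_atTop_zero
    have hNM : ∀ z : V, N (Ninvhalf (Ninvhalf z)) = z := by
      have h1 : (Ninvhalf * Ninvhalf) * N = 1 := by
        have : (Ninvhalf * Ninvhalf) * N = Ninvhalf ∘ₗ Ninvhalf ∘ₗ N := by
          rfl
        rw [this, hNih_sq]; rfl
      have h2 : N * (Ninvhalf * Ninvhalf) = 1 := mul_eq_one_comm.mp h1
      intro z
      have := DFunLike.congr_fun h2 z
      simpa [Module.End.mul_apply] using this
    have hc : Continuous fun z : V => N (Ninvhalf z) :=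
      (N.continuous_of_finiteDimensional).comp (Ninvhalf.continuous_of_finiteDimensional)
    have h9 : Tendsto (fun k => N (Ninvhalf (Ninvhalf (d k)))) atTop (nhds (N (Ninvhalf 0))) :=
      (hc.tendsto _).comp hMd
    have h10 : (fun k => N (Ninvhalf (Ninvhalf (d k)))) = d := by
      funext k; exact hNM (d k)
    rw [h10] at h9
    simpa using h9
  have hGr0 : Tendsto (fun k => G (LinearMap.adjoint G (v (k + 1)) - c)) atTop (nhds 0) := by
    have hcc := (G.continuous_of_finiteDimensional.tendsto 0).comp hr0
    simpa only [Function.comp_def, map_zero] using hcc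
  have hξG : Tendsto (fun k => (d k - G (x k)
      - σ • G (LinearMap.adjoint G (v (k + 1)) - c) - T (v (k + 1) - v k))
      + G (x (k + 1))) atTop (nhds 0) := by
    have hfun : ∀ k, (d k - G (x k) - σ • G (LinearMap.adjoint G (v (k + 1)) - c)
        - T (v (k + 1) - v k)) + G (x (k + 1))
        = d k + ((τ * σ - σ) • G (LinearMap.adjoint G (v (k + 1)) - c)
          - T (v (k + 1) - v k)) := by
      intro k
      rw [hx_update k, map_add, map_smul, sub_smul]
      abel
    rw [funext hfun]
    have h1 : Tendsto (fun k => (τ * σ - σ) • G (LinearMap.adjoint G (v (k + 1)) - c))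
        atTop (nhds 0) := by
      have := hGr0.const_smul (τ * σ - σ)
      simpa using this
    have h2 := (h1.sub hTw0)
    have h3 := hd0.add h2
    simpa using h3
  -- Bolzano-Weierstrass
  have hmem : ∀ k, (v k, x k) ∈ Metric.closedBall (0 : V × X) R := by
    intro k
    rw [Metric.mem_closedBall, dist_zero_right]
    rw [Prod.norm_def]
    exact max_le (hRof k).1 (hRof k).2
  obtain ⟨pr, hprcl, φ, hφ, hφt⟩ :=
    tendsto_subseq_of_bounded Metric.isBounded_closedBall hmem
  obtain ⟨vst, xst⟩ := pr
  have hvφ : Tendsto (fun j => v (φ j)) atTop (nhds vst) := by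
    exact (continuous_fst.tendsto ((vst, xst) : V × X)).comp hφt
  have hxφ : Tendsto (fun j => x (φ j)) atTop (nhds xst) := by
    exact (continuous_snd.tendsto ((vst, xst) : V × X)).comp hφt
  -- the cluster point is a KKT point
  have hAv : Tendsto (fun k => LinearMap.adjoint G (v k)) atTop (nhds c) := by
    apply (tendsto_add_atTop_iff_nat 1).mp
    have h1 : Tendsto (fun k => (LinearMap.adjoint G (v (k + 1)) - c) + c) atTop
        (nhds (0 + c)) := hr0.add tendsto_const_nhds
    simpa using h1
  have hkktst : KKT (vst, xst) := by
    rw [hKKT]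
    constructor
    · -- subdifferential part
      set h : ℕ → ℕ := fun j => φ (j + 1) - 1 with hhdef
      have hφge : ∀ j, j + 1 ≤ φ (j + 1) := fun j => (hφ.le_apply)
      have hh1 : ∀ j, h j + 1 = φ (j + 1) := by
        intro j; have := hφge j; simp only [hhdef]; omega
      have hhge : ∀ j, j ≤ h j := by
        intro j; have := hφge j; simp only [hhdef]; omega
      have hhtop : Tendsto h atTop atTop := tendsto_atTop_mono hhge tendsto_id
      have hvh : Tendsto (fun j => v (h j + 1)) atTop (nhds vst) := by
        have h1 : Tendsto (fun j => v (φ (j + 1))) atTop (nhds vst) :=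
          hvφ.comp (tendsto_add_atTop_nat 1)
        have h2 : (fun j => v (h j + 1)) = fun j => v (φ (j + 1)) := by
          funext j; rw [hh1 j]
        rw [h2]; exact h1
      have hxh : Tendsto (fun j => x (h j + 1)) atTop (nhds xst) := by
        have h1 : Tendsto (fun j => x (φ (j + 1))) atTop (nhds xst) :=
          hxφ.comp (tendsto_add_atTop_nat 1)
        have h2 : (fun j => x (h j + 1)) = fun j => x (φ (j + 1)) := by
          funext j; rw [hh1 j]
        rw [h2]; exact h1
      have hGxh : Tendsto (fun j => G (x (h j + 1))) atTop (nhds (G xst)) :=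
        (G.continuous_of_finiteDimensional.tendsto _).comp hxh
      have haj : Tendsto (fun j => d (h j) - G (x (h j))
          - σ • G (LinearMap.adjoint G (v (h j + 1)) - c) - T (v (h j + 1) - v (h j)))
          atTop (nhds (-(G xst))) := by
        have h1 : Tendsto (fun j => (d (h j) - G (x (h j))
            - σ • G (LinearMap.adjoint G (v (h j + 1)) - c) - T (v (h j + 1) - v (h j)))
            + G (x (h j + 1))) atTop (nhds 0) := hξG.comp hhtop
        have h2 := h1.sub hGxh
        simp only [zero_sub] at h2
        have h3 : (fun j => (d (h j) - G (x (h j))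
            - σ • G (LinearMap.adjoint G (v (h j + 1)) - c) - T (v (h j + 1) - v (h j)))
            + G (x (h j + 1)) - G (x (h j + 1)))
            = fun j => d (h j) - G (x (h j))
            - σ • G (LinearMap.adjoint G (v (h j + 1)) - c) - T (v (h j + 1) - v (h j)) := by
          funext j; abel
        rwa [h3] at h2
      -- lsc closedness of the subdifferential
      intro y
      by_cases hy : g y = ⊤
      · rw [hy]; exact le_top
      obtain ⟨ry, hry⟩ := ereal_exists_coe (hg_proper.1 y) hy
      rw [hry]
      apply ereal_le_coe_sub
      have hbj : ∀ j, g (v (h j + 1))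
          ≤ ((ry - ⟪d (h j) - G (x (h j))
            - σ • G (LinearMap.adjoint G (v (h j + 1)) - c) - T (v (h j + 1) - v (h j)),
            y - v (h j + 1)⟫ : ℝ) : EReal) := by
        intro j
        apply ereal_add_le_coe
        rw [← hry]
        exact hd_mem (h j) y
      have hb_tend : Tendsto (fun j => ry - ⟪d (h j) - G (x (h j))
          - σ • G (LinearMap.adjoint G (v (h j + 1)) - c) - T (v (h j + 1) - v (h j)),
          y - v (h j + 1)⟫) atTop (nhds (ry - ⟪-(G xst), y - vst⟫)) := by
        apply Tendsto.const_sub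
        exact haj.inner (tendsto_const_nhds.sub hvh)
      by_contra hcon
      push_neg at hcon
      obtain ⟨z, hz1, hz2⟩ := exists_between hcon
      have hev1 : ∀ᶠ j in atTop, z < g (v (h j + 1)) :=
        hvh.eventually ((hg_closed vst) z hz2)
      have hev2 : ∀ᶠ j in atTop, ((ry - ⟪d (h j) - G (x (h j))
          - σ • G (LinearMap.adjoint G (v (h j + 1)) - c) - T (v (h j + 1) - v (h j)),
          y - v (h j + 1)⟫ : ℝ) : EReal) < z := by
        have hcoe : Tendsto (fun j => ((ry - ⟪d (h j) - G (x (h j))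
            - σ • G (LinearMap.adjoint G (v (h j + 1)) - c) - T (v (h j + 1) - v (h j)),
            y - v (h j + 1)⟫ : ℝ) : EReal)) atTop
            (nhds ((ry - ⟪-(G xst), y - vst⟫ : ℝ) : EReal)) :=
          (continuous_coe_real_ereal.tendsto _).comp hb_tend
        exact hcoe.eventually_mem (isOpen_Iio.mem_nhds hz1)
      obtain ⟨j, hj1, hj2⟩ := (hev1.and hev2).exists
      exact absurd (lt_trans hj1 (lt_of_le_of_lt (hbj j) hj2)) (lt_irrefl _)
    · -- linear constraint part
      have h1 : Tendsto (fun j => LinearMap.adjoint G (v (φ j))) atTop (nhds c) :=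
        hAv.comp hφ.tendsto_atTop
      have h2 : Tendsto (fun j => LinearMap.adjoint G (v (φ j))) atTop
          (nhds (LinearMap.adjoint G vst)) :=
        ((LinearMap.adjoint G).continuous_of_finiteDimensional.tendsto _).comp hvφ
      exact tendsto_nhds_unique h2 h1
  -- second application of the key estimates, with the cluster point
  have hkktst' := hkktst
  rw [hKKT] at hkktst'
  obtain ⟨hvstsub, hvstadj⟩ := hkktst'
  obtain ⟨B1, L1, hθB1, hqB1, hδt1, hθt1, hqC1⟩ :=
    ispalm_main g G c σ τ hσ ⟨hτ0, hτ2⟩ Sg hSg_psd hSg_bound T hT_sym hT_psd N hN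
      Ninvhalf hNih_sym hNih_sq ε hε_nonneg hε_sum v x d hd_mem hd_small hx_update
      vst xst hvstsub hvstadj
  -- θ' along the subsequence tends to 0, hence L1 = 0
  have hthphi : Tendsto (fun j => (1 / (τ * σ)) * ‖x (φ j) - xst‖ ^ 2
      + ⟪v (φ j) - vst, T (v (φ j) - vst)⟫) atTop (nhds 0) := by
    have h1 : Tendsto (fun j => x (φ j) - xst) atTop (nhds 0) := by
      have := hxφ.sub (tendsto_const_nhds (x := xst))
      simpa using this
    have h2 : Tendsto (fun j => v (φ j) - vst) atTop (nhds 0) := by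
      have := hvφ.sub (tendsto_const_nhds (x := vst))
      simpa using this
    have h3 : Tendsto (fun j => (1 / (τ * σ)) * ‖x (φ j) - xst‖ ^ 2) atTop (nhds 0) := by
      have h4 : Tendsto (fun j => ‖x (φ j) - xst‖) atTop (nhds 0) := by
        rw [← tendsto_zero_iff_norm_tendsto_zero]; exact h1
      have h5 := (h4.pow 2).const_mul (1 / (τ * σ))
      simpa using h5
    have h6 : Tendsto (fun j => ⟪v (φ j) - vst, T (v (φ j) - vst)⟫) atTop (nhds 0) := by
      have h7 : Tendsto (fun j => T (v (φ j) - vst)) atTop (nhds (T 0)) :=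
        (T.continuous_of_finiteDimensional.tendsto _).comp h2
      rw [map_zero] at h7
      have h8 := Filter.Tendsto.inner (𝕜 := ℝ) h2 h7
      simpa using h8
    have := h3.add h6
    simpa using this
  have hL1 : L1 = 0 := by
    have h1 : Tendsto (fun j => (1 / (τ * σ)) * ‖x (φ j) - xst‖ ^ 2
        + ⟪v (φ j) - vst, T (v (φ j) - vst)⟫) atTop (nhds L1) :=
      hθt1.comp hφ.tendsto_atTop
    exact tendsto_nhds_unique h1 hthphi
  rw [hL1] at hθt1
  -- convergence of x
  have hx_tend : Tendsto x atTop (nhds xst) := by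
    have h1 : Tendsto (fun k => ‖x k - xst‖ ^ 2) atTop (nhds 0) := by
      apply squeeze_zero (fun k => sq_nonneg _)
        (g := fun k => (τ * σ) * ((1 / (τ * σ)) * ‖x k - xst‖ ^ 2
          + ⟪v k - vst, T (v k - vst)⟫))
      · intro k
        beta_reduce
        have h2 := hT_psd (v k - vst)
        have h3 : (τ * σ) * ((1 / (τ * σ)) * ‖x k - xst‖ ^ 2) = ‖x k - xst‖ ^ 2 := by
          field_simp
        nlinarith [ht, h2, h3]
      · have := hθt1.const_mul (τ * σ)
        simpa using this
    have h4 : Tendsto (fun k => ‖x k - xst‖) atTop (nhds 0) := by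
      have heq : (fun k => ‖x k - xst‖) = fun k => Real.sqrt (‖x k - xst‖ ^ 2) := by
        funext k; rw [Real.sqrt_sq (norm_nonneg _)]
      rw [heq]
      exact (Real.continuous_sqrt.tendsto' 0 0 Real.sqrt_zero).comp h1
    rw [← tendsto_zero_iff_norm_tendsto_zero] at h4
    have h5 := h4.add (tendsto_const_nhds (x := xst))
    simpa using h5
  -- convergence of v
  have hθ1shift : Tendsto (fun k => (1 / (τ * σ)) * ‖x (k + 1) - xst‖ ^ 2
      + ⟪v (k + 1) - vst, T (v (k + 1) - vst)⟫) atTop (nhds 0) :=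
    hθt1.comp (tendsto_add_atTop_nat 1)
  have hq1 : Tendsto (fun k => ⟪v (k + 1) - vst, N (v (k + 1) - vst)⟫) atTop (nhds 0) := by
    apply squeeze_zero ?_ (fun k => hqC1 k)
    swap
    · intro k
      rcases eq_or_ne (v (k + 1) - vst) 0 with he | he
      · rw [he]; simp
      · exact (hN_pd _ he).le
    · have h1 := (hδt1.add hθ1shift).const_mul (1 + 1 / (2 - τ))
      simpa using h1
  have hv_tend : Tendsto v atTop (nhds vst) := by
    have h1 : Tendsto (fun k => ‖v (k + 1) - vst‖ ^ 2) atTop (nhds 0) := by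
      apply squeeze_zero (fun k => sq_nonneg _)
        (g := fun k => (1 / lam) * ⟪v (k + 1) - vst, N (v (k + 1) - vst)⟫)
      · intro k
        beta_reduce
        have h2 := hlamle (v (k + 1) - vst)
        have h3 : (1 / lam) * (lam * ‖v (k + 1) - vst‖ ^ 2) = ‖v (k + 1) - vst‖ ^ 2 := by
          field_simp
        have h9 : (0:ℝ) < 1 / lam := by positivity
        linarith [mul_le_mul_of_nonneg_left h2 h9.le, h3.ge, h3.le]
      · have := hq1.const_mul (1 / lam)
        simpa using this
    have h4 : Tendsto (fun k => ‖v (k + 1) - vst‖) atTop (nhds 0) := by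
      have heq : (fun k => ‖v (k + 1) - vst‖) = fun k => Real.sqrt (‖v (k + 1) - vst‖ ^ 2) := by
        funext k; rw [Real.sqrt_sq (norm_nonneg _)]
      rw [heq]
      exact (Real.continuous_sqrt.tendsto' 0 0 Real.sqrt_zero).comp h1
    rw [← tendsto_zero_iff_norm_tendsto_zero] at h4
    have h5 : Tendsto (fun k => v (k + 1)) atTop (nhds vst) := by
      have h6 := h4.add (tendsto_const_nhds (x := vst))
      simpa using h6
    exact (tendsto_add_atTop_iff_nat 1).mp h5
  have hfull : Tendsto (fun k => (v k, x k)) atTop (nhds ((vst, xst) : V × X)) :=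
    hv_tend.prodMk_nhds hx_tend
  refine ⟨⟨R, hRof⟩, ?_, ⟨(vst, xst), hkktst, hfull⟩⟩
  intro pr hpr
  have hprq : pr = (vst, xst) := by
    have h1 : ClusterPt pr (Filter.map (fun k => (v k, x k)) atTop) := hpr
    have h2 : Filter.map (fun k => (v k, x k)) atTop ≤ nhds (vst, xst) := hfull
    have h3 : ClusterPt pr (nhds (vst, xst)) := h1.mono h2
    exact eq_of_nhds_neBot h3
  rw [hprq]
  exact hkktst
end
end

section
/- One-step distance estimate for inexact semi-proximal ALM subproblems (Lemma A.1). Let g : V → (−∞, +∞] be closed proper convex, G : X → V linear, c ∈ X, σ > 0, Σ_g a self-adjoint positive semidefinite operator satisfying ⟨ζ − ζ̃, v − ṽ⟩ ≥ ‖v − ṽ‖²_{Σ_g} for all v, ṽ ∈ dom g, ζ ∈ ∂g(v), ζ̃ ∈ ∂g(ṽ), T a self-adjoint positive semidefinite operator, and suppose N := Σ_g + T + σGG* is positive definite. Fix v₀ ∈ V and x ∈ X. If v̄ satisfies 0 ∈ ∂g(v̄) + Gx + σG(G*v̄ − c) + T(v̄ − v₀) and v satisfies d ∈ ∂g(v)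 + Gx + σG(G*v − c) + T(v − v₀) for some d ∈ V, then ‖v − v̄‖_N ≤ ‖N^{−1/2}d‖. -/
open RealInnerProductSpace

noncomputable section

/-- **One-step distance estimate for inexact semi-proximal ALM subproblems (Lemma A.1).**
Let `g` be closed proper convex, `G : X → V` linear, `c ∈ X`, `σ > 0`, `Σ_g` a self-adjoint
positive semidefinite operator with `⟨ζ − ζ̃, v − vtil⟩ ≥ ‖v − vtil‖²_{Σ_g}` for subgradients, `T`
self-adjoint positive semidefinite, and `N := Σ_g + T + σGG*` positive definite.  Fix `v₀`
and `x`.  If `vbar` satisfies `0 ∈ ∂g(vbar) + Gx + σG(G*vbar − c) + T(vbar − v₀)` and `v` satisfies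
`d ∈ ∂g(v) + Gx + σG(G*v − c) + T(v − v₀)`, then `‖v − vbar‖_N ≤ ‖N^{−1/2}d‖`. -/
theorem ispalm_one_step_distance_estimate
    {V X : Type*} [NormedAddCommGroup V] [InnerProductSpace ℝ V] [FiniteDimensional ℝ V]
    [NormedAddCommGroup X] [InnerProductSpace ℝ X] [FiniteDimensional ℝ X]
    (g : V → EReal)
    (hg_proper : (∀ v, g v ≠ ⊥) ∧ ∃ v, g v ≠ ⊤)
    (hg_convex : Convex ℝ {pr : V × ℝ | g pr.1 ≤ (pr.2 : EReal)})
    (hg_closed : LowerSemicontinuous g)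
    (G : X →ₗ[ℝ] V) (c : X) (σ : ℝ) (hσ : 0 < σ)
    (Sg : V →ₗ[ℝ] V) (hSg_sym : LinearMap.IsSymmetric Sg) (hSg_psd : ∀ u, 0 ≤ ⟪u, Sg u⟫)
    (hSg_bound : ∀ v vtil ζ ζ', ζ ∈ SubdiffAt g v → ζ' ∈ SubdiffAt g vtil →
      ⟪v - vtil, Sg (v - vtil)⟫ ≤ ⟪ζ - ζ', v - vtil⟫)
    (T : V →ₗ[ℝ] V) (hT_sym : LinearMap.IsSymmetric T) (hT_psd : ∀ u, 0 ≤ ⟪u, T u⟫)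
    (N : V →ₗ[ℝ] V) (hN : N = Sg + T + σ • (G ∘ₗ LinearMap.adjoint G))
    (hN_pd : ∀ u : V, u ≠ 0 → 0 < ⟪u, N u⟫)
    -- `Ninvhalf` is the operator `N^{−1/2}`: the (unique) symmetric positive semidefinite
    -- operator whose square is the inverse of `N`.
    (Ninvhalf : V →ₗ[ℝ] V) (hNih_sym : LinearMap.IsSymmetric Ninvhalf)
    (hNih_psd : ∀ u, 0 ≤ ⟪u, Ninvhalf u⟫)
    (hNih_sq : Ninvhalf ∘ₗ Ninvhalf ∘ₗ N = LinearMap.id)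
    (v₀ : V) (x : X) (vbar v d : V)
    (hvbar : -(G x) - σ • G (LinearMap.adjoint G vbar - c) - T (vbar - v₀) ∈ SubdiffAt g vbar)
    (hv : d - G x - σ • G (LinearMap.adjoint G v - c) - T (v - v₀) ∈ SubdiffAt g v) :
    Real.sqrt ⟪v - vbar, N (v - vbar)⟫ ≤ ‖Ninvhalf d‖ := by
  set u := v - vbar with hu
  have hsub := hSg_bound v vbar _ _ hv hvbar
  have hζ : (d - G x - σ • G (LinearMap.adjoint G v - c) - T (v - v₀)) -
      (-(G x) - σ • G (LinearMap.adjoint G vbar - c) - T (vbar - v₀))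
      = d - σ • G (LinearMap.adjoint G u) - T u := by
    simp only [hu, map_sub, smul_sub]
    abel
  rw [hζ] at hsub
  -- key inequality: ⟪u, N u⟫ ≤ ⟪d, u⟫
  have hkey : ⟪u, N u⟫ ≤ ⟪d, u⟫ := by
    have hNu : N u = Sg u + T u + σ • G (LinearMap.adjoint G u) := by
      rw [hN]; simp [LinearMap.add_apply, LinearMap.smul_apply]
    rw [hNu]
    have hexp : ⟪d - σ • G (LinearMap.adjoint G u) - T u, u⟫
        = ⟪d, u⟫ - σ * ⟪G (LinearMap.adjoint G u), u⟫ - ⟪T u, u⟫ := by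
      rw [inner_sub_left, inner_sub_left, inner_smul_left]
      norm_num
    rw [hexp] at hsub
    have h1 : ⟪u, T u⟫ = ⟪T u, u⟫ := real_inner_comm _ _
    have h2 : ⟪u, G (LinearMap.adjoint G u)⟫ = ⟪G (LinearMap.adjoint G u), u⟫ :=
      real_inner_comm _ _
    rw [inner_add_right, inner_add_right, real_inner_smul_right, h1, h2]
    linarith
  have hid : ∀ w : V, Ninvhalf (Ninvhalf (N w)) = w := by
    intro w
    have := congrFun (congrArg DFunLike.coe hNih_sq) w
    simpa using this
  have hdu : ⟪d, u⟫ = ⟪Ninvhalf d, Ninvhalf (N u)⟫ := by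
    conv_lhs => rw [← hid u]
    rw [← hNih_sym d (Ninvhalf (N u))]
  have hnorm : ‖Ninvhalf (N u)‖ ^ 2 = ⟪u, N u⟫ := by
    rw [← real_inner_self_eq_norm_sq, hNih_sym, hid, real_inner_comm]
  have hA : 0 ≤ ⟪u, N u⟫ := by
    by_cases h : u = 0
    · simp [h]
    · exact (hN_pd u h).le
  have hcs : ⟪d, u⟫ ≤ ‖Ninvhalf d‖ * ‖Ninvhalf (N u)‖ := by
    rw [hdu]; exact real_inner_le_norm _ _
  have hAeq : ‖Ninvhalf (N u)‖ = Real.sqrt ⟪u, N u⟫ := by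
    rw [← hnorm, Real.sqrt_sq (norm_nonneg _)]
  set s := Real.sqrt ⟪u, N u⟫ with hs
  have hs2 : s * s = ⟪u, N u⟫ := Real.mul_self_sqrt hA
  have hchain : s * s ≤ ‖Ninvhalf d‖ * s := by
    rw [hs2]; calc ⟪u, N u⟫ ≤ ⟪d, u⟫ := hkey
      _ ≤ ‖Ninvhalf d‖ * ‖Ninvhalf (N u)‖ := hcs
      _ = ‖Ninvhalf d‖ * s := by rw [hAeq]
  rcases eq_or_lt_of_le (Real.sqrt_nonneg ⟪u, N u⟫) with h0 | h0
  · rw [hs, ← h0]; exact norm_nonneg _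
  · exact le_of_mul_le_mul_right (by linarith [hchain]) h0
end
end

section
/- Symmetric Gauss-Seidel factorization and positive definiteness (first claim of Proposition 2.2). Let Y = Y_1 × … × Y_p be a product of finite-dimensional real inner product spaces and let E be a self-adjoint linear operator on Y written in block form as E = E_u* + E_d + E_u, where E_d = Diag(E_11, …, E_pp) is block diagonal with each diagonal block E_ii self-adjoint and positive definite, and E_u is strictly block upper triangular. Define sGS(E) := E_u E_d^{−1} E_u*. Then Ê := E + sGS(E) satisfies Ê = (E_d + E_u) E_d^{−1} (E_d + E_u)*, and Ê is self-adjoint positive definite. -/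
open RealInnerProductSpace

noncomputable section

variable {p : ℕ} {Y : Fin p → Type*}
  [∀ i, NormedAddCommGroup (Y i)] [∀ i, InnerProductSpace ℝ (Y i)]
  [∀ i, FiniteDimensional ℝ (Y i)]

/-- The inclusion of the `j`-th factor into the product `Y = Y_1 × … × Y_p`. -/
def blockIncl (j : Fin p) : Y j →ₗ[ℝ] PiLp 2 Y :=
  (WithLp.linearEquiv 2 ℝ (∀ i, Y i)).symm.toLinearMap ∘ₗ LinearMap.single ℝ Y j

/-- The `(i,j)` block of a linear operator `E` on the product `Y = Y_1 × … × Y_p`. -/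
def blockOf (E : PiLp 2 Y →ₗ[ℝ] PiLp 2 Y) (i j : Fin p) : Y j →ₗ[ℝ] Y i :=
  PiLp.projₗ 2 Y i ∘ₗ E ∘ₗ blockIncl j

set_option linter.unusedSectionVars false in
lemma blockIncl_apply (j : Fin p) (v : Y j) (i : Fin p) :
    (blockIncl (Y := Y) j v) i = Pi.single j v i := rfl
set_option linter.unusedSectionVars false in
lemma sum_incl (x : PiLp 2 Y) : ∑ j, blockIncl (Y := Y) j (x j) = x := by
  refine PiLp.ext fun i => ?_
  have : (∑ j, blockIncl (Y := Y) j (x j)) i = ∑ j, (blockIncl (Y := Y) j (x j)) i := by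
    rw [WithLp.ofLp_sum, Finset.sum_apply]
  rw [this]; simp [blockIncl_apply]
set_option linter.unusedSectionVars false in
lemma apply_blocks (A : PiLp 2 Y →ₗ[ℝ] PiLp 2 Y) (x : PiLp 2 Y) (i : Fin p) :
    A x i = ∑ j, blockOf A i j (x j) := by
  conv_lhs => rw [← sum_incl x]
  rw [map_sum, WithLp.ofLp_sum]
  exact Finset.sum_apply i Finset.univ _
set_option linter.unusedSectionVars false in
lemma blockOf_add (A B : PiLp 2 Y →ₗ[ℝ] PiLp 2 Y) (i j : Fin p) :
    blockOf (A + B) i j = blockOf A i j + blockOf B i j := by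
  simp [blockOf, LinearMap.comp_add, LinearMap.add_comp]

/-- **Symmetric Gauss–Seidel factorization and positive definiteness (first claim of
Proposition 2.2).**  Let `E = E_u* + E_d + E_u` be a self-adjoint operator on
`Y = Y_1 × … × Y_p`, where `E_d` is block diagonal with each diagonal block self-adjoint
positive definite, and `E_u` is strictly block upper triangular.  With
`sGS(E) := E_u E_d⁻¹ E_u*`, the operator `Ê := E + sGS(E)` satisfies
`Ê = (E_d + E_u) E_d⁻¹ (E_d + E_u)*`, and `Ê` is self-adjoint positive definite. -/
theorem sGS_factorization_posdef
    (E Ed Eu : PiLp 2 Y →ₗ[ℝ] PiLp 2 Y)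
    (hE_sym : LinearMap.IsSymmetric E)
    (hdecomp : E = LinearMap.adjoint Eu + Ed + Eu)
    (hEd_diag : ∀ i j : Fin p, i ≠ j → blockOf Ed i j = 0)
    (hEd_blk_sym : ∀ (i : Fin p) (u w : Y i), ⟪blockOf Ed i i u, w⟫ = ⟪u, blockOf Ed i i w⟫)
    (hEd_blk_pd : ∀ (i : Fin p) (u : Y i), u ≠ 0 → 0 < ⟪u, blockOf Ed i i u⟫)
    (hEu_upper : ∀ i j : Fin p, j ≤ i → blockOf Eu i j = 0)
    (EdInv : PiLp 2 Y →ₗ[ℝ] PiLp 2 Y)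
    (hEdInv₁ : Ed ∘ₗ EdInv = LinearMap.id) (hEdInv₂ : EdInv ∘ₗ Ed = LinearMap.id) :
    E + Eu ∘ₗ EdInv ∘ₗ LinearMap.adjoint Eu =
      (Ed + Eu) ∘ₗ EdInv ∘ₗ LinearMap.adjoint (Ed + Eu) ∧
    LinearMap.IsSymmetric (E + Eu ∘ₗ EdInv ∘ₗ LinearMap.adjoint Eu) ∧
    (∀ u : PiLp 2 Y, u ≠ 0 → 0 < ⟪u, (E + Eu ∘ₗ EdInv ∘ₗ LinearMap.adjoint Eu) u⟫) := by
  -- Ed applies blockwise diagonally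
  have hEd_apply : ∀ (x : PiLp 2 Y) (i : Fin p), Ed x i = blockOf Ed i i (x i) := by
    intro x i
    rw [apply_blocks]
    rw [Finset.sum_eq_single i]
    · intro j _ hj; rw [hEd_diag i j (Ne.symm hj)]; rfl
    · intro h; exact absurd (Finset.mem_univ i) h
  -- Ed is symmetric
  have hEd_sym : LinearMap.IsSymmetric Ed := by
    intro x y
    rw [PiLp.inner_apply, PiLp.inner_apply]
    refine Finset.sum_congr rfl fun i _ => ?_
    rw [hEd_apply, hEd_apply, hEd_blk_sym]
  -- Ed is positive definite
  have hEd_pd : ∀ x : PiLp 2 Y, x ≠ 0 → 0 < ⟪x, Ed x⟫ := by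
    intro x hx
    rw [PiLp.inner_apply]
    have hnn : ∀ i : Fin p, 0 ≤ ⟪x i, Ed x i⟫ := by
      intro i
      rw [hEd_apply]
      by_cases h : x i = 0
      · simp [h]
      · exact le_of_lt (hEd_blk_pd i (x i) h)
    obtain ⟨i, hi⟩ : ∃ i, x i ≠ 0 := by
      by_contra h
      push_neg at h
      exact hx (WithLp.ofLp_injective 2 (funext h))
    refine Finset.sum_pos' (fun i _ => hnn i) ⟨i, Finset.mem_univ i, ?_⟩
    rw [hEd_apply]; exact hEd_blk_pd i (x i) hi
  -- adjoint Ed = Ed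
  have hEd_adj : LinearMap.adjoint Ed = Ed :=
    ((LinearMap.eq_adjoint_iff Ed Ed).mpr (fun x y => hEd_sym x y)).symm
  -- EdInv symmetric (as bilinear identity)
  have hEdInv_sym : ∀ a b : PiLp 2 Y, ⟪a, EdInv b⟫ = ⟪EdInv a, b⟫ := by
    intro a b
    have ha : Ed (EdInv a) = a := congrFun (congrArg DFunLike.coe hEdInv₁) a
    conv_lhs => rw [← ha]
    rw [hEd_sym (EdInv a) (EdInv b)]
    congr 1
    exact congrFun (congrArg DFunLike.coe hEdInv₁) b
  -- EdInv positive definite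
  have hEdInv_pd : ∀ v : PiLp 2 Y, v ≠ 0 → 0 < ⟪v, EdInv v⟫ := by
    intro v hv
    have hz : EdInv v ≠ 0 := by
      intro h
      apply hv
      have := congrFun (congrArg DFunLike.coe hEdInv₁) v
      simp only [LinearMap.coe_comp, Function.comp_apply, LinearMap.id_coe, id_eq] at this
      rw [← this, h, map_zero]
    have hEdv : Ed (EdInv v) = v := congrFun (congrArg DFunLike.coe hEdInv₁) v
    calc 0 < ⟪EdInv v, Ed (EdInv v)⟫ := hEd_pd _ hz
      _ = ⟪Ed (EdInv v), EdInv v⟫ := real_inner_comm _ _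
      _ = ⟪v, EdInv v⟫ := by rw [hEdv]
  -- factorization identity
  have hfact : E + Eu ∘ₗ EdInv ∘ₗ LinearMap.adjoint Eu =
      (Ed + Eu) ∘ₗ EdInv ∘ₗ LinearMap.adjoint (Ed + Eu) := by
    rw [map_add, hEd_adj]
    rw [hdecomp]
    refine LinearMap.ext fun x => ?_
    have h1 : ∀ z, Ed (EdInv z) = z := fun z => congrFun (congrArg DFunLike.coe hEdInv₁) z
    have h2 : ∀ z, EdInv (Ed z) = z := fun z => congrFun (congrArg DFunLike.coe hEdInv₂) z
    simp only [LinearMap.add_apply, LinearMap.comp_apply, LinearMap.coe_comp,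
      Function.comp_apply, map_add, h1, h2]
    abel
  refine ⟨hfact, ?_, ?_⟩
  · -- symmetry
    intro x y
    rw [LinearMap.add_apply, LinearMap.add_apply, inner_add_left, inner_add_right,
      hE_sym x y]
    congr 1
    simp only [LinearMap.coe_comp, Function.comp_apply]
    rw [← LinearMap.adjoint_inner_right Eu, ← hEdInv_sym, LinearMap.adjoint_inner_left Eu]
  · -- positive definiteness
    intro u hu
    set M := Ed + Eu with hM
    have hrw : E + Eu ∘ₗ EdInv ∘ₗ LinearMap.adjoint Eu = M ∘ₗ EdInv ∘ₗ LinearMap.adjoint M := hfact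
    rw [hrw]
    simp only [LinearMap.coe_comp, Function.comp_apply]
    rw [← LinearMap.adjoint_inner_left M]
    -- need: adjoint M u ≠ 0
    have hMinj : Function.Injective M := by
      intro a b hab
      rw [← sub_eq_zero] at hab ⊢
      set x := a - b with hx
      rw [← map_sub] at hab
      -- show x = 0 from M x = 0
      have key : ∀ n : ℕ, ∀ i : Fin p, p - i.val ≤ n → x i = 0 := by
        intro n
        induction n with
        | zero => intro i hi; exact absurd hi (by omega)
        | succ n ih =>
          intro i hi
          have hz : ∀ j : Fin p, i < j → x j = 0 := fun j hj => ih j (by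
            have := j.isLt
            have hij : i.val < j.val := hj
            omega)
          have h0 : (M x) i = 0 := by rw [hab]; rfl
          rw [apply_blocks] at h0
          have hsum : ∑ j, blockOf M i j (x j) = blockOf Ed i i (x i) := by
            rw [Finset.sum_eq_single i]
            · rw [hM, blockOf_add, hEu_upper i i le_rfl, add_zero]
            · intro j _ hj
              rw [hM, blockOf_add]
              rcases lt_or_gt_of_ne hj with h | h
              · rw [hEd_diag i j (Ne.symm hj), hEu_upper i j (le_of_lt h)]; simp
              · rw [hz j h]; simp
            · intro h; exact absurd (Finset.mem_univ i) h
          rw [hsum] at h0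
          by_contra hne
          have := hEd_blk_pd i (x i) hne
          rw [h0, inner_zero_right] at this
          exact lt_irrefl 0 this
      have : x = 0 := WithLp.ofLp_injective 2 <| funext fun i => key p i (by omega)
      exact this
    have hMsurj : Function.Surjective M :=
      (LinearMap.injective_iff_surjective).mp hMinj
    have hadj_ne : LinearMap.adjoint M u ≠ 0 := by
      intro h
      apply hu
      have : ∀ y : PiLp 2 Y, ⟪u, M y⟫ = 0 := by
        intro y
        rw [← LinearMap.adjoint_inner_left M, h, inner_zero_left]
      obtain ⟨y, hy⟩ := hMsurj u
      have := this y
      rw [hy] at this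
      exact inner_self_eq_zero.mp this
    exact hEdInv_pd _ hadj_ne
end
end

section
/- Block reduction of the Newton system V̂ d = r to a smaller symmetric positive definite system (derivation of equations (eq-hatdy) and (eq-hatdwP) in Section 4.2). Let σ > 0, ν > 0, 1 ≤ p ≤ n, and partition Q ∈ S^n_+ as Q = [[Q_PP, Q_PZ], [Q_PZᵀ, Q_ZZ]] with Q_PP ∈ ℝ^{p×p}, A = [A_P, A_Z] with A_P ∈ ℝ^{m×p}, and U = Diag(I_p, 0) ∈ ℝ^{n×n}. Let r₁ = (r₁^P; r₁^Z) ∈ ℝ^n and r₂ ∈ ℝ^m, and define r̄₁ := r₁^P − σ(1+ν)^{−1} Q_PZ r₁^Z and r̄₂ := r₂ + σ(1+ν)^{−1} A_P Q_PZ r₁^Z. Then (d̂_w, d̂_y) = ((d̂_w^P; d̂_w^Z), d̂_y) ∈ ℝ^n × ℝ^m solves the system ((1+ν)I_n + σUQ) d̂_w − σUA* d̂_y = r₁, −σAUQ d̂_w + (νI_m + σAUA*) d̂_y = r₂, if and only if (i) d̂_w^Z = (1+ν)^{−1} r₁^Z, (ii) d̂_w^P solves ((1+ν)I_p + σQ_PP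 + ν^{−1}(1+ν)σ A_P*A_P) d̂_w^P = r̄₁ + ν^{−1}σ A_P*(A_P r̄₁ + r̄₂), and (iii) d̂_y = ν^{−1}(A_P r̄₁ + r̄₂ − (1+ν) A_P d̂_w^P). Moreover, the p×p coefficient matrix (1+ν)I_p + σQ_PP + ν^{−1}(1+ν)σ A_P*A_P is symmetric positive definite. -/
/-!
Since `U = Diag(I_p, 0)` kills the `Z`-rows, the `Z`-block of the first equation is just
`(1+ν) d̂_w^Z = r₁^Z`; substituting it moves the `Q_PZ`-terms to the right-hand sides `r̄₁, r̄₂`.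
Adding `A_P` times the remaining first equation to the second cancels the `Q_PP`-terms and leaves
`ν d̂_y + (1+ν) A_P d̂_w^P = A_P r̄₁ + r̄₂`, which is (iii); substituting (iii) back into the first
equation gives (ii). The coefficient matrix of (ii) is a positive multiple of `I_p` plus
nonnegative multiples of the positive semidefinite matrices `Q_PP` (a principal block of `Q`) and
`A_PᵀA_P`.
-/

open Matrix

theorem Sum.smul_elim {M α β γ : Type*} [SMul M γ] (c : M) (a : α → γ) (b : β → γ) :
    c • Sum.elim a b = Sum.elim (c • a) (c • b) := by
  ext (_ | _) <;> rfl

section Elimination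

variable {K ι ζ κ : Type*} [Field K] [Fintype ι] [Fintype ζ] [Fintype κ]

theorem saddle_system_iff_schur_complement {c σ ν : K} (hν : ν ≠ 0) (Q : Matrix ι ι K)
    (A : Matrix κ ι K) (b₁ : ι → K) (b₂ : κ → K) (x : ι → K) (y : κ → K) :
    (c • x + σ • (Q *ᵥ x) - σ • (Aᵀ *ᵥ y) = b₁ ∧
        -(σ • (A *ᵥ (Q *ᵥ x))) + ν • y + σ • (A *ᵥ (Aᵀ *ᵥ y)) = b₂) ↔
      (c • x + σ • (Q *ᵥ x) + (ν⁻¹ * c * σ) • ((Aᵀ * A) *ᵥ x) =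
          b₁ + (ν⁻¹ * σ) • (Aᵀ *ᵥ (A *ᵥ b₁ + b₂)) ∧
        y = ν⁻¹ • (A *ᵥ b₁ + b₂ - c • (A *ᵥ x))) := by
  constructor
  · rintro ⟨h₁, h₂⟩
    have hA₁ := congrArg (A *ᵥ ·) h₁
    simp only [mulVec_add, mulVec_sub, mulVec_smul] at hA₁
    have hy : y = ν⁻¹ • (A *ᵥ b₁ + b₂ - c • (A *ᵥ x)) := by
      rw [eq_inv_smul_iff₀ hν]
      linear_combination (norm := module) hA₁ + h₂
    refine ⟨?_, hy⟩
    subst hy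
    simp only [mulVec_add, mulVec_sub, mulVec_smul, ← mulVec_mulVec] at h₁ ⊢
    linear_combination (norm := module) h₁
  · rintro ⟨h₁, rfl⟩
    have hA₁ := congrArg (A *ᵥ ·) h₁
    simp only [mulVec_add, mulVec_sub, mulVec_smul, ← mulVec_mulVec] at h₁ hA₁ ⊢
    constructor
    · linear_combination (norm := module) h₁
    · linear_combination (norm := module)
        mul_inv_cancel₀ hν • (A *ᵥ b₁ + b₂ - c • (A *ᵥ x)) - hA₁

theorem block_system_iff_eliminate_inr {c σ ν : K} (hc : c ≠ 0) (QPP : Matrix ι ι K)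
    (QPZ : Matrix ι ζ K) (AP : Matrix κ ι K) (r₁P : ι → K) (r₁Z : ζ → K) (r₂ : κ → K)
    (xP : ι → K) (xZ : ζ → K) (y : κ → K) :
    ((c • xP + σ • (QPP *ᵥ xP + QPZ *ᵥ xZ) - σ • (APᵀ *ᵥ y) = r₁P ∧ c • xZ = r₁Z) ∧
        -(σ • (AP *ᵥ (QPP *ᵥ xP + QPZ *ᵥ xZ))) + ν • y + σ • (AP *ᵥ (APᵀ *ᵥ y)) = r₂) ↔
      xZ = c⁻¹ • r₁Z ∧
        (c • xP + σ • (QPP *ᵥ xP) - σ • (APᵀ *ᵥ y) = r₁P - (σ * c⁻¹) • (QPZ *ᵥ r₁Z) ∧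
          -(σ • (AP *ᵥ (QPP *ᵥ xP))) + ν • y + σ • (AP *ᵥ (APᵀ *ᵥ y)) =
            r₂ + (σ * c⁻¹) • (AP *ᵥ (QPZ *ᵥ r₁Z))) := by
  rw [and_comm (a := _ = r₁P), and_assoc, ← eq_inv_smul_iff₀ hc]
  refine and_congr_right fun hZ => ?_
  subst hZ
  simp only [mulVec_add, mulVec_smul, smul_add, smul_smul]
  refine and_congr ⟨fun h => ?_, fun h => ?_⟩ ⟨fun h => ?_, fun h => ?_⟩ <;>
    linear_combination (norm := module) h

end Elimination

theorem newton_system_iff_blocks {R ι ζ κ : Type*} [CommRing R] [Fintype ι] [DecidableEq ι]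
    [Fintype ζ] [Fintype κ] (c σ ν : R) (QPP : Matrix ι ι R) (QPZ : Matrix ι ζ R)
    (QZZ : Matrix ζ ζ R) (AP : Matrix κ ι R) (AZ : Matrix κ ζ R) (r₁P : ι → R) (r₁Z : ζ → R)
    (r₂ : κ → R) (xP : ι → R) (xZ : ζ → R) (y : κ → R) :
    (c • Sum.elim xP xZ +
          σ • (fromBlocks (1 : Matrix ι ι R) 0 0 0 *ᵥ
            (fromBlocks QPP QPZ QPZᵀ QZZ *ᵥ Sum.elim xP xZ)) -
          σ • (fromBlocks (1 : Matrix ι ι R) 0 0 0 *ᵥ ((fromCols AP AZ)ᵀ *ᵥ y)) =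
        Sum.elim r₁P r₁Z ∧
      -(σ • (fromCols AP AZ *ᵥ (fromBlocks (1 : Matrix ι ι R) 0 0 0 *ᵥ
            (fromBlocks QPP QPZ QPZᵀ QZZ *ᵥ Sum.elim xP xZ)))) +
          ν • y +
          σ • (fromCols AP AZ *ᵥ
            (fromBlocks (1 : Matrix ι ι R) 0 0 0 *ᵥ ((fromCols AP AZ)ᵀ *ᵥ y))) =
        r₂) ↔
    ((c • xP + σ • (QPP *ᵥ xP + QPZ *ᵥ xZ) - σ • (APᵀ *ᵥ y) = r₁P ∧ c • xZ = r₁Z) ∧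
        -(σ • (AP *ᵥ (QPP *ᵥ xP + QPZ *ᵥ xZ))) + ν • y + σ • (AP *ᵥ (APᵀ *ᵥ y)) = r₂) := by
  simp only [fromBlocks_mulVec, transpose_fromCols, fromRows_mulVec, Sum.elim_comp_inl,
    Sum.elim_comp_inr, one_mulVec, zero_mulVec, add_zero, fromCols_mulVec_sumElim, mulVec_zero,
    Sum.smul_elim, smul_zero, sub_zero, ← Sum.elim_add_add, ← Sum.elim_sub_sub, Sum.elim_eq_iff]

theorem Matrix.PosDef.smul_one_add_smul_add_smul_transpose_mul {n m : Type*} [Fintype n]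
    [DecidableEq n] [Fintype m] {c σ t : ℝ} (hc : 0 < c) (hσ : 0 ≤ σ) (ht : 0 ≤ t)
    {Q : Matrix n n ℝ} (hQ : Q.PosSemidef) (A : Matrix m n ℝ) :
    (c • (1 : Matrix n n ℝ) + σ • Q + t • (Aᵀ * A)).PosDef :=
  ((PosDef.one.smul hc).add_posSemidef (hQ.smul hσ)).add_posSemidef
    ((posSemidef_conjTranspose_mul_self A).smul ht)

theorem newton_system_block_reduction_general
    {m p q : ℕ} (σ ν : ℝ) (hσ : 0 < σ) (hν : 0 < ν)
    (QPP : Matrix (Fin p) (Fin p) ℝ) (QPZ : Matrix (Fin p) (Fin q) ℝ)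
    (QZZ : Matrix (Fin q) (Fin q) ℝ)
    (hQ : (Matrix.fromBlocks QPP QPZ QPZᵀ QZZ).PosSemidef)
    (AP : Matrix (Fin m) (Fin p) ℝ) (AZ : Matrix (Fin m) (Fin q) ℝ)
    (r₁P : Fin p → ℝ) (r₁Z : Fin q → ℝ) (r₂ : Fin m → ℝ)
    (rbar₁ : Fin p → ℝ) (hrbar₁ : rbar₁ = r₁P - (σ * (1 + ν)⁻¹) • (QPZ *ᵥ r₁Z))
    (rbar₂ : Fin m → ℝ) (hrbar₂ : rbar₂ = r₂ + (σ * (1 + ν)⁻¹) • (AP *ᵥ (QPZ *ᵥ r₁Z))) :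
    (∀ (dP : Fin p → ℝ) (dZ : Fin q → ℝ) (dy : Fin m → ℝ),
      ((1 + ν) • (Sum.elim dP dZ) +
          σ • ((Matrix.fromBlocks (1 : Matrix (Fin p) (Fin p) ℝ) 0 0 0) *ᵥ
            ((Matrix.fromBlocks QPP QPZ QPZᵀ QZZ) *ᵥ (Sum.elim dP dZ))) -
          σ • ((Matrix.fromBlocks (1 : Matrix (Fin p) (Fin p) ℝ) 0 0 0) *ᵥ
            ((Matrix.fromCols AP AZ)ᵀ *ᵥ dy)) = Sum.elim r₁P r₁Z ∧
        -(σ • ((Matrix.fromCols AP AZ) *ᵥ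
            ((Matrix.fromBlocks (1 : Matrix (Fin p) (Fin p) ℝ) 0 0 0) *ᵥ
              ((Matrix.fromBlocks QPP QPZ QPZᵀ QZZ) *ᵥ (Sum.elim dP dZ))))) +
          ν • dy +
          σ • ((Matrix.fromCols AP AZ) *ᵥ
            ((Matrix.fromBlocks (1 : Matrix (Fin p) (Fin p) ℝ) 0 0 0) *ᵥ
              ((Matrix.fromCols AP AZ)ᵀ *ᵥ dy))) = r₂)
      ↔
      (dZ = (1 + ν)⁻¹ • r₁Z ∧
        (1 + ν) • dP + σ • (QPP *ᵥ dP) + (ν⁻¹ * (1 + ν) * σ) • ((APᵀ * AP) *ᵥ dP) =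
          rbar₁ + (ν⁻¹ * σ) • (APᵀ *ᵥ (AP *ᵥ rbar₁ + rbar₂)) ∧
        dy = ν⁻¹ • (AP *ᵥ rbar₁ + rbar₂ - (1 + ν) • (AP *ᵥ dP)))) ∧
    ((1 + ν) • (1 : Matrix (Fin p) (Fin p) ℝ) + σ • QPP +
        (ν⁻¹ * (1 + ν) * σ) • (APᵀ * AP)).PosDef := by
  have hc : 0 < 1 + ν := by positivity
  refine ⟨fun dP dZ dy => ?_, ?_⟩
  · rw [newton_system_iff_blocks, block_system_iff_eliminate_inr hc.ne',
      saddle_system_iff_schur_complement hν.ne', hrbar₁, hrbar₂]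
  · exact .smul_one_add_smul_add_smul_transpose_mul hc hσ.le (by positivity)
      (hQ.submatrix Sum.inl) AP

/-- **Block reduction of the Newton system `V̂ d = r` to a smaller symmetric positive definite
system.**  Let `σ > 0`, `ν > 0`, `1 ≤ p`, and partition `Q ∈ S^n₊` as
`Q = [[Q_PP, Q_PZ], [Q_PZᵀ, Q_ZZ]]`, `A = [A_P, A_Z]`, `U = Diag(I_p, 0)`.  With
`r̄₁ := r₁^P − σ(1+ν)⁻¹ Q_PZ r₁^Z` and `r̄₂ := r₂ + σ(1+ν)⁻¹ A_P Q_PZ r₁^Z`, the pair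
`(d̂_w, d̂_y) = ((d̂_w^P; d̂_w^Z), d̂_y)` solves
`((1+ν)I_n + σUQ) d̂_w − σUA* d̂_y = r₁`, `−σAUQ d̂_w + (νI_m + σAUA*) d̂_y = r₂`
iff (i) `d̂_w^Z = (1+ν)⁻¹ r₁^Z`, (ii) `d̂_w^P` solves
`((1+ν)I_p + σQ_PP + ν⁻¹(1+ν)σ A_P*A_P) d̂_w^P = r̄₁ + ν⁻¹σ A_P*(A_P r̄₁ + r̄₂)`, and
(iii) `d̂_y = ν⁻¹(A_P r̄₁ + r̄₂ − (1+ν) A_P d̂_w^P)`.  Moreover, the `p×p` coefficient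
matrix `(1+ν)I_p + σQ_PP + ν⁻¹(1+ν)σ A_P*A_P` is symmetric positive definite. -/
theorem newton_system_block_reduction
    {m p q : ℕ} (hp : 1 ≤ p) (σ ν : ℝ) (hσ : 0 < σ) (hν : 0 < ν)
    (QPP : Matrix (Fin p) (Fin p) ℝ) (QPZ : Matrix (Fin p) (Fin q) ℝ)
    (QZZ : Matrix (Fin q) (Fin q) ℝ)
    (hQ : (Matrix.fromBlocks QPP QPZ QPZᵀ QZZ).PosSemidef)
    (AP : Matrix (Fin m) (Fin p) ℝ) (AZ : Matrix (Fin m) (Fin q) ℝ)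
    (r₁P : Fin p → ℝ) (r₁Z : Fin q → ℝ) (r₂ : Fin m → ℝ)
    (rbar₁ : Fin p → ℝ) (hrbar₁ : rbar₁ = r₁P - (σ * (1 + ν)⁻¹) • (QPZ *ᵥ r₁Z))
    (rbar₂ : Fin m → ℝ) (hrbar₂ : rbar₂ = r₂ + (σ * (1 + ν)⁻¹) • (AP *ᵥ (QPZ *ᵥ r₁Z))) :
    (∀ (dP : Fin p → ℝ) (dZ : Fin q → ℝ) (dy : Fin m → ℝ),
      ((1 + ν) • (Sum.elim dP dZ) +
          σ • ((Matrix.fromBlocks (1 : Matrix (Fin p) (Fin p) ℝ) 0 0 0) *ᵥ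
            ((Matrix.fromBlocks QPP QPZ QPZᵀ QZZ) *ᵥ (Sum.elim dP dZ))) -
          σ • ((Matrix.fromBlocks (1 : Matrix (Fin p) (Fin p) ℝ) 0 0 0) *ᵥ
            ((Matrix.fromCols AP AZ)ᵀ *ᵥ dy)) = Sum.elim r₁P r₁Z ∧
        -(σ • ((Matrix.fromCols AP AZ) *ᵥ
            ((Matrix.fromBlocks (1 : Matrix (Fin p) (Fin p) ℝ) 0 0 0) *ᵥ
              ((Matrix.fromBlocks QPP QPZ QPZᵀ QZZ) *ᵥ (Sum.elim dP dZ))))) +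
          ν • dy +
          σ • ((Matrix.fromCols AP AZ) *ᵥ
            ((Matrix.fromBlocks (1 : Matrix (Fin p) (Fin p) ℝ) 0 0 0) *ᵥ
              ((Matrix.fromCols AP AZ)ᵀ *ᵥ dy))) = r₂)
      ↔
      (dZ = (1 + ν)⁻¹ • r₁Z ∧
        (1 + ν) • dP + σ • (QPP *ᵥ dP) + (ν⁻¹ * (1 + ν) * σ) • ((APᵀ * AP) *ᵥ dP) =
          rbar₁ + (ν⁻¹ * σ) • (APᵀ *ᵥ (AP *ᵥ rbar₁ + rbar₂)) ∧
        dy = ν⁻¹ • (AP *ᵥ rbar₁ + rbar₂ - (1 + ν) • (AP *ᵥ dP)))) ∧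
    ((1 + ν) • (1 : Matrix (Fin p) (Fin p) ℝ) + σ • QPP +
        (ν⁻¹ * (1 + ν) * σ) • (APᵀ * AP)).PosDef :=
  newton_system_block_reduction_general σ ν hσ hν QPP QPZ QZZ hQ AP AZ r₁P r₁Z r₂ rbar₁ hrbar₁ rbar₂
    hrbar₂
end
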